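/- arXiv:2507.10517 — 8 statements merged into one kernel-verified Lean document; each statement's English description precedes it below -/
import Mathlib

section
/- Upwards propagation of superstatistics (energy-space form of the main theorem). Let Ω_B : (0,∞) → [0,∞) be measurable with Z_B(β) := ∫₀^∞ Ω_B(E) exp(−βE) dE finite and strictly positive for every β > 0. Let ν be a Borel measure on (0,∞) such that ρ(E) := ∫₀^∞ exp(−βE) dν(β) is finite for every E > 0, and let f_A : (0,∞) → [0,∞) be measurable with ∫₀^∞ f_A(β) exp(−βε) dβ finite for every ε > 0. If for every ε > 0 one has ∫₀^∞ Ω_B(E′) ρ(ε + E′) dE′ = ∫₀^∞ f_A(β) exp(−βε) dβ, then the measure ν is absolutely continuous with respect to Lebesgue measure with density f_A(β)/Z_B(β); equivalently, ρ(E) = ∫₀^∞ (f_A(β)/Z_B(β)) · exp(−βE) dβ for every E > 0. -/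
/-!
Since `ρ(1) < ∞`, the measure `ν` is σ-finite, and Tonelli turns the marginal condition into
`∫ e^{-βε} Z_B(β) dν(β) = ∫_{β>0} e^{-βε} f_A(β) dβ` for all `ε > 0`: the measures `Z_B • ν` and
`f_A • dβ` have the same Laplace transform on `(0, ∞)`. A measure on `(0, ∞)` is determined by
this: after weighting by `e^{-β}` and pushing forward along `β ↦ e^{-β}`, the transform at `n + 1`
becomes the `n`-th moment of a finite measure on `[0, 1]`, and moments determine such a measure by
Weierstrass approximation. Dividing by `Z_B`, which is positive and finite, gives
`ν = (f_A / Z_B) • dβ`.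
-/

open MeasureTheory Set ENNReal

namespace MeasureTheory

lemma continuous_integral_continuousMap {X : Type*} [TopologicalSpace X] [CompactSpace X]
    [MeasurableSpace X] [BorelSpace X] (μ : Measure X) [IsFiniteMeasure μ] :
    Continuous fun g : C(X, ℝ) => ∫ x, g x ∂μ :=
  (continuous_integral.comp (ContinuousMap.toLp (E := ℝ) 1 μ ℝ).continuous).congr fun g =>
    integral_congr_ae (ContinuousMap.coeFn_toLp μ g)

lemma integral_eval_eq_of_integral_pow_eq {a b : ℝ} {μ₁ μ₂ : Measure (Icc a b)}
    [IsFiniteMeasure μ₁] [IsFiniteMeasure μ₂]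
    (h : ∀ n : ℕ, ∫ x, (x : ℝ) ^ n ∂μ₁ = ∫ x, (x : ℝ) ^ n ∂μ₂) (p : Polynomial ℝ) :
    ∫ x, p.eval (x : ℝ) ∂μ₁ = ∫ x, p.eval (x : ℝ) ∂μ₂ := by
  have hint : ∀ (μ : Measure (Icc a b)) [IsFiniteMeasure μ] (q : Polynomial ℝ),
      Integrable (fun x : Icc a b => q.eval (x : ℝ)) μ := fun μ _ q =>
    (BoundedContinuousFunction.mkOfCompact (q.toContinuousMapOn (Icc a b))).integrable μ
  induction p using Polynomial.induction_on' with
  | add p q hp hq =>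
    simp only [Polynomial.eval_add]
    rw [integral_add (hint μ₁ p) (hint μ₁ q), integral_add (hint μ₂ p) (hint μ₂ q), hp, hq]
  | monomial n c =>
    simp only [Polynomial.eval_monomial]
    rw [integral_const_mul, integral_const_mul, h n]

theorem Measure.ext_of_integral_pow_eq {a b : ℝ} {μ₁ μ₂ : Measure (Icc a b)}
    [IsFiniteMeasure μ₁] [IsFiniteMeasure μ₂]
    (h : ∀ n : ℕ, ∫ x, (x : ℝ) ^ n ∂μ₁ = ∫ x, (x : ℝ) ^ n ∂μ₂) : μ₁ = μ₂ := by
  have hclosed : IsClosed {g : C(Icc a b, ℝ) | ∫ x, g x ∂μ₁ = ∫ x, g x ∂μ₂} :=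
    isClosed_eq (continuous_integral_continuousMap μ₁) (continuous_integral_continuousMap μ₂)
  have hpoly : (polynomialFunctions (Icc a b) : Set C(Icc a b, ℝ)) ⊆
      {g | ∫ x, g x ∂μ₁ = ∫ x, g x ∂μ₂} := by
    rw [polynomialFunctions_coe]
    rintro _ ⟨p, rfl⟩
    simpa using integral_eval_eq_of_integral_pow_eq h p
  have hdense : closure (polynomialFunctions (Icc a b) : Set C(Icc a b, ℝ)) = univ := by
    rw [← Subalgebra.topologicalClosure_coe, polynomialFunctions_closure_eq_top]
    rfl
  refine ext_of_forall_integral_eq_of_IsFiniteMeasure fun g => ?_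
  exact hclosed.closure_subset_iff.mpr hpoly (hdense ▸ mem_univ g.toContinuousMap)

lemma ae_pos_of_measure_Iic_eq_zero {μ : Measure ℝ} (h : μ (Iic 0) = 0) : ∀ᵐ β ∂μ, 0 < β := by
  rw [ae_iff]
  simp only [not_lt]
  exact h

lemma sigmaFinite_of_lintegral_ne_top {α : Type*} [MeasurableSpace α] {μ : Measure α}
    {f : α → ℝ≥0∞} (hf : Measurable f) (hf0 : ∀ x, f x ≠ 0) (hfin : ∫⁻ x, f x ∂μ ≠ ⊤) :
    SigmaFinite μ := by
  have := isFiniteMeasure_withDensity hfin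
  rw [← withDensity_inv_same hf (ae_of_all _ hf0) ((ae_lt_top hf hfin).mono fun _ => ne_of_lt)]
  exact SigmaFinite.withDensity_of_ne_top' fun x => ENNReal.inv_ne_top.mpr (hf0 x)

lemma eq_withDensity_div_of_withDensity_eq {α : Type*} [MeasurableSpace α] {ν m : Measure α}
    {Z g : α → ℝ≥0∞} (hZ : Measurable Z) (hg : Measurable g) (hZ0 : ∀ᵐ x ∂ν, Z x ≠ 0)
    (hZtop : ∀ᵐ x ∂ν, Z x ≠ ⊤) (h : ν.withDensity Z = m.withDensity g) :
    ν = m.withDensity fun x => g x / Z x := by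
  rw [← withDensity_inv_same hZ hZ0 hZtop, h]
  exact (withDensity_mul m hg hZ.inv).symm

noncomputable def expNegIcc (β : ℝ) : Icc (0:ℝ) 1 := projIcc 0 1 zero_le_one (Real.exp (-β))

lemma measurable_expNegIcc : Measurable expNegIcc :=
  (continuous_projIcc.comp (Real.continuous_exp.comp continuous_neg)).measurable

lemma coe_expNegIcc {β : ℝ} (hβ : 0 ≤ β) : (expNegIcc β : ℝ) = Real.exp (-β) :=
  congrArg Subtype.val <| projIcc_of_mem _
    ⟨(Real.exp_pos _).le, Real.exp_le_one_iff.mpr (neg_nonpos.mpr hβ)⟩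

section Laplace

variable {μ : Measure ℝ}

lemma map_neg_log_map_expNegIcc (hμ : μ (Iic 0) = 0) :
    (μ.map expNegIcc).map (fun x : Icc (0:ℝ) 1 => -Real.log x) = μ := by
  have hlog : Measurable fun x : Icc (0:ℝ) 1 => -Real.log x := by fun_prop
  rw [Measure.map_map hlog measurable_expNegIcc]
  have hleft : (fun x : Icc (0:ℝ) 1 => -Real.log x) ∘ expNegIcc =ᵐ[μ] id := by
    filter_upwards [ae_pos_of_measure_Iic_eq_zero hμ] with β hβ
    simp [coe_expNegIcc hβ.le]
  rw [Measure.map_congr hleft, Measure.map_id]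

lemma lintegral_pow_map_expNegIcc_withDensity (hμ : μ (Iic 0) = 0) (n : ℕ) :
    ∫⁻ x, ENNReal.ofReal ((x : ℝ) ^ n)
        ∂(μ.withDensity fun β => ENNReal.ofReal (Real.exp (-β))).map expNegIcc
      = ∫⁻ β, ENNReal.ofReal (Real.exp (-β * (n + 1))) ∂μ := by
  rw [lintegral_map (by fun_prop) measurable_expNegIcc,
    lintegral_withDensity_eq_lintegral_mul _ (by fun_prop) (by fun_prop)]
  refine lintegral_congr_ae ?_
  filter_upwards [ae_pos_of_measure_Iic_eq_zero hμ] with β hβ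
  rw [Pi.mul_apply, coe_expNegIcc hβ.le, ← Real.exp_nat_mul, ← ENNReal.ofReal_mul (by positivity),
    ← Real.exp_add]
  ring_nf

theorem Measure.ext_of_lintegral_exp_neg_mul_eq {μ₁ μ₂ : Measure ℝ} (h₁ : μ₁ (Iic 0) = 0)
    (h₂ : μ₂ (Iic 0) = 0) (hfin : ∫⁻ β, ENNReal.ofReal (Real.exp (-β)) ∂μ₁ ≠ ⊤)
    (hL : ∀ ε > (0:ℝ), ∫⁻ β, ENNReal.ofReal (Real.exp (-β * ε)) ∂μ₁
        = ∫⁻ β, ENNReal.ofReal (Real.exp (-β * ε)) ∂μ₂) : μ₁ = μ₂ := by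
  set w : ℝ → ℝ≥0∞ := fun β => ENNReal.ofReal (Real.exp (-β))
  have hw : Measurable w := by fun_prop
  have hfin₂ : ∫⁻ β, w β ∂μ₂ ≠ ⊤ := by
    simpa [w] using (hL 1 one_pos).symm.trans_ne (by simpa using hfin)
  have := isFiniteMeasure_withDensity hfin
  have := isFiniteMeasure_withDensity hfin₂
  have hmap : (μ₁.withDensity w).map expNegIcc = (μ₂.withDensity w).map expNegIcc := by
    refine Measure.ext_of_integral_pow_eq fun n => ?_
    have hpow : Continuous fun x : Icc (0:ℝ) 1 => (x : ℝ) ^ n := by fun_prop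
    rw [integral_eq_lintegral_of_nonneg_ae (ae_of_all _ fun x => pow_nonneg x.2.1 n)
        hpow.aestronglyMeasurable,
      integral_eq_lintegral_of_nonneg_ae (ae_of_all _ fun x => pow_nonneg x.2.1 n)
        hpow.aestronglyMeasurable,
      lintegral_pow_map_expNegIcc_withDensity h₁, lintegral_pow_map_expNegIcc_withDensity h₂,
      hL _ (by positivity)]
  have hκ : μ₁.withDensity w = μ₂.withDensity w := by
    rw [← map_neg_log_map_expNegIcc (withDensity_absolutelyContinuous μ₁ w h₁), hmap,
      map_neg_log_map_expNegIcc (withDensity_absolutelyContinuous μ₂ w h₂)]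
  have hw_ne_zero : ∀ β, w β ≠ 0 := fun β => by simp [w, Real.exp_pos]
  have hw_ne_top : ∀ β, w β ≠ ⊤ := fun β => ENNReal.ofReal_ne_top
  rw [← withDensity_inv_same hw (ae_of_all μ₁ hw_ne_zero) (ae_of_all μ₁ hw_ne_top), hκ,
    withDensity_inv_same hw (ae_of_all μ₂ hw_ne_zero) (ae_of_all μ₂ hw_ne_top)]

end Laplace

section Superstatistics

variable {m ν : Measure ℝ} [SFinite m] {Ω : ℝ → ℝ}

lemma measurable_lintegral_ofReal_mul_exp_neg_mul (hΩ : Measurable Ω) :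
    Measurable fun β => ∫⁻ E, ENNReal.ofReal (Ω E * Real.exp (-β * E)) ∂m :=
  Measurable.lintegral_prod_right (f := fun β E => ENNReal.ofReal (Ω E * Real.exp (-β * E)))
    (by fun_prop)

lemma lintegral_mul_lintegral_exp_neg_mul_add [SFinite ν] (hΩ : Measurable Ω) (ε : ℝ) :
    ∫⁻ E, ENNReal.ofReal (Ω E) * ∫⁻ β, ENNReal.ofReal (Real.exp (-β * (ε + E))) ∂ν ∂m
      = ∫⁻ β, (∫⁻ E, ENNReal.ofReal (Ω E * Real.exp (-β * E)) ∂m)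
          * ENNReal.ofReal (Real.exp (-β * ε)) ∂ν := by
  have hsplit : ∀ β E, ENNReal.ofReal (Ω E) * ENNReal.ofReal (Real.exp (-β * (ε + E)))
      = ENNReal.ofReal (Ω E * Real.exp (-β * E)) * ENNReal.ofReal (Real.exp (-β * ε)) := by
    intro β E
    rw [← ENNReal.ofReal_mul' (Real.exp_pos _).le, ← ENNReal.ofReal_mul' (Real.exp_pos _).le,
      mul_assoc, ← Real.exp_add]
    ring_nf
  calc _ = ∫⁻ E, ∫⁻ β, ENNReal.ofReal (Ω E * Real.exp (-β * E))
          * ENNReal.ofReal (Real.exp (-β * ε)) ∂ν ∂m := by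
        refine lintegral_congr fun E => ?_
        simp_rw [← lintegral_const_mul _ (by fun_prop : Measurable fun β : ℝ =>
          ENNReal.ofReal (Real.exp (-β * (ε + E)))), hsplit]
    _ = _ := lintegral_lintegral_swap (by fun_prop)
    _ = _ := lintegral_congr fun β => lintegral_mul_const _ (by fun_prop)

end Superstatistics

end MeasureTheory

theorem upwards_propagation_of_superstatistics_general
    (ΩB : ℝ → ℝ) (hΩB : Measurable ΩB)
    (ZB : ℝ → ℝ≥0∞)
    (hZB : ∀ β, ZB β = ∫⁻ E in Ioi (0:ℝ), ENNReal.ofReal (ΩB E * Real.exp (-β * E)))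
    (hZBpos : ∀ β > (0:ℝ), 0 < ZB β) (hZBfin : ∀ β > (0:ℝ), ZB β < ⊤)
    (ν : Measure ℝ) (hν : ν (Iic 0) = 0)
    (ρ : ℝ → ℝ≥0∞)
    (hρ : ∀ E, ρ E = ∫⁻ β, ENNReal.ofReal (Real.exp (-β * E)) ∂ν)
    (hρfin : ∀ E > (0:ℝ), ρ E < ⊤)
    (fA : ℝ → ℝ) (hfA : Measurable fA)
    (hfAfin : ∀ ε > (0:ℝ),
      ∫⁻ β in Ioi (0:ℝ), ENNReal.ofReal (fA β * Real.exp (-β * ε)) < ⊤)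
    (hmarg : ∀ ε > (0:ℝ),
      ∫⁻ E' in Ioi (0:ℝ), ENNReal.ofReal (ΩB E') * ρ (ε + E')
        = ∫⁻ β in Ioi (0:ℝ), ENNReal.ofReal (fA β * Real.exp (-β * ε))) :
    ν = (volume.restrict (Ioi (0:ℝ))).withDensity
        (fun β => ENNReal.ofReal (fA β) / ZB β)
    ∧ ∀ E > (0:ℝ), ρ E
        = ∫⁻ β in Ioi (0:ℝ),
            (ENNReal.ofReal (fA β) / ZB β) * ENNReal.ofReal (Real.exp (-β * E)) := by
  have hZBmeas : Measurable ZB :=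
    (funext hZB : ZB = _) ▸ measurable_lintegral_ofReal_mul_exp_neg_mul hΩB
  have : SigmaFinite ν := sigmaFinite_of_lintegral_ne_top
    (f := fun β => ENNReal.ofReal (Real.exp (-β))) (by fun_prop)
    (fun β => by simp [Real.exp_pos]) (by simpa [hρ] using (hρfin 1 one_pos).ne)
  set μA := (volume.restrict (Ioi (0:ℝ))).withDensity fun β => ENNReal.ofReal (fA β)
  have hμA : ∀ ε, ∫⁻ β, ENNReal.ofReal (Real.exp (-β * ε)) ∂μA
      = ∫⁻ β in Ioi (0:ℝ), ENNReal.ofReal (fA β * Real.exp (-β * ε)) := fun ε => by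
    rw [lintegral_withDensity_eq_lintegral_mul _ (by fun_prop) (by fun_prop)]
    simp_rw [Pi.mul_apply, ← ENNReal.ofReal_mul' (Real.exp_pos _).le]
  have hLaplace : ∀ ε > (0:ℝ), ∫⁻ β, ENNReal.ofReal (Real.exp (-β * ε)) ∂μA
      = ∫⁻ β, ENNReal.ofReal (Real.exp (-β * ε)) ∂ν.withDensity ZB := by
    intro ε hε
    rw [hμA, lintegral_withDensity_eq_lintegral_mul _ hZBmeas (by fun_prop)]
    simp_rw [Pi.mul_apply, ← hmarg ε hε, hρ, lintegral_mul_lintegral_exp_neg_mul_add hΩB, ← hZB]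
  have hμA_Iic : μA (Iic 0) = 0 := withDensity_absolutelyContinuous _ _ <| by
    simp [Measure.restrict_apply measurableSet_Iic, Iic_inter_Ioi]
  have hμ : μA = ν.withDensity ZB := Measure.ext_of_lintegral_exp_neg_mul_eq hμA_Iic
    (withDensity_absolutelyContinuous ν ZB hν)
    (by simpa using ((hμA 1).trans_lt (hfAfin 1 one_pos)).ne) hLaplace
  have hν_pos := ae_pos_of_measure_Iic_eq_zero hν
  have hνeq := eq_withDensity_div_of_withDensity_eq hZBmeas (by fun_prop)
    (hν_pos.mono fun β hβ => (hZBpos β hβ).ne') (hν_pos.mono fun β hβ => (hZBfin β hβ).ne)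
    hμ.symm
  refine ⟨hνeq, fun E _ => ?_⟩
  rw [hρ E, hνeq, lintegral_withDensity_eq_lintegral_mul _ (by fun_prop) (by fun_prop)]
  rfl

/-- **Upwards propagation of superstatistics (energy-space form).** Let `Ω_B` be a
density of states with partition function `Z_B(β)` finite and positive for `β > 0`, and
let `ν` be a Borel measure on `(0,∞)` (a measure on `ℝ` vanishing on `(-∞,0]`) whose
Laplace transform `ρ(E) = ∫ exp(-βE) dν(β)` is finite for all `E > 0`. If the marginal
`ε ↦ ∫₀^∞ Ω_B(E') ρ(ε+E') dE'` equals the Laplace transform of a weight `f_A` (finite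
for all `ε > 0`), then `ν` is absolutely continuous with respect to Lebesgue measure
with density `f_A(β)/Z_B(β)`; equivalently `ρ(E) = ∫₀^∞ (f_A(β)/Z_B(β)) exp(-βE) dβ`. -/
theorem upwards_propagation_of_superstatistics
    (ΩB : ℝ → ℝ) (hΩB : Measurable ΩB) (hΩB0 : ∀ E, 0 ≤ ΩB E)
    (ZB : ℝ → ℝ≥0∞)
    (hZB : ∀ β, ZB β = ∫⁻ E in Ioi (0:ℝ), ENNReal.ofReal (ΩB E * Real.exp (-β * E)))
    (hZBpos : ∀ β > (0:ℝ), 0 < ZB β) (hZBfin : ∀ β > (0:ℝ), ZB β < ⊤)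
    (ν : Measure ℝ) (hν : ν (Iic 0) = 0)
    (ρ : ℝ → ℝ≥0∞)
    (hρ : ∀ E, ρ E = ∫⁻ β, ENNReal.ofReal (Real.exp (-β * E)) ∂ν)
    (hρfin : ∀ E > (0:ℝ), ρ E < ⊤)
    (fA : ℝ → ℝ) (hfA : Measurable fA) (hfA0 : ∀ β, 0 ≤ fA β)
    (hfAfin : ∀ ε > (0:ℝ),
      ∫⁻ β in Ioi (0:ℝ), ENNReal.ofReal (fA β * Real.exp (-β * ε)) < ⊤)
    (hmarg : ∀ ε > (0:ℝ),
      ∫⁻ E' in Ioi (0:ℝ), ENNReal.ofReal (ΩB E') * ρ (ε + E')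
        = ∫⁻ β in Ioi (0:ℝ), ENNReal.ofReal (fA β * Real.exp (-β * ε))) :
    ν = (volume.restrict (Ioi (0:ℝ))).withDensity
        (fun β => ENNReal.ofReal (fA β) / ZB β)
    ∧ ∀ E > (0:ℝ), ρ E
        = ∫⁻ β in Ioi (0:ℝ),
            (ENNReal.ofReal (fA β) / ZB β) * ENNReal.ofReal (Real.exp (-β * E)) :=
  upwards_propagation_of_superstatistics_general ΩB hΩB ZB hZB hZBpos hZBfin ν hν ρ hρ hρfin fA hfA
    hfAfin hmarg
end

section
/- Closure theorem, microstate form. Let (X, μ_A) and (Y, μ_B) be σ-finite measure spaces, H_A : X → [0,∞) and H_B : Y → [0,∞) measurable, with the range of H_A equal to (0,∞), and with Z_A(β) := ∫_X exp(−β H_A) dμ_A and Z_B(β) := ∫_Y exp(−β H_B) dμ_B finite and strictly positive for all β > 0. Let ν be a Borel measure on (0,∞) such that ρ(E) := ∫₀^∞ exp(−βE) dν(β) is finite for all E > 0, and suppose the composite system is in the steady state with joint density p(x,y) := ρ(H_A(x) + H_B(y)). Let P : (0,∞) → [0,∞) be a probability density with ∫₀^∞ P(β) exp(−βε)/Z_A(β)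 dβ finite for all ε > 0. If the marginal of subsystem A is superstatistical with inverse temperature distribution P, i.e. for every x ∈ X, ∫_Y p(x,y) dμ_B(y) = ∫₀^∞ P(β) exp(−β H_A(x))/Z_A(β) dβ, then ν has Lebesgue density P(β)/(Z_A(β)·Z_B(β)), and consequently p(x,y) = ∫₀^∞ P(β) · exp(−β(H_A(x)+H_B(y)))/(Z_A(β)·Z_B(β)) dβ for all (x,y); i.e. the composite system AB is superstatistical with the same inverse temperature distribution P. -/
open MeasureTheory Set ENNReal

/-!
Weighting `ν` by the partition function `ZB` gives a measure whose Laplace transform at `ε`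
is, by Tonelli, `∫ ρ(ε + HB y) dμB(y)`. At `ε = HA x` this is the marginal of `A`, so by
hypothesis it equals the Laplace transform of `P(β)/ZA(β) dβ` on `(0,∞)`; as `HA` takes every
positive value, the two measures have the same Laplace transform on `(0,∞)` and therefore
coincide. Dividing by `ZB` identifies `ν`.

Laplace transforms determine measures on `[0,∞)`: tilting by `exp(-s₀β)` makes them finite, and
on `[0,∞)` the powers of `exp(-β)` span a point-separating algebra of bounded continuous
functions, whose integrals determine a finite measure.
-/

noncomputable def laplaceTransform (m : Measure ℝ) (s : ℝ) : ℝ≥0∞ :=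
  ∫⁻ β, ENNReal.ofReal (Real.exp (-β * s)) ∂m

noncomputable def partitionFunction {X : Type*} [MeasurableSpace X] (μ : Measure X) (H : X → ℝ)
    (β : ℝ) : ℝ :=
  ∫ x, Real.exp (-β * H x) ∂μ

open BoundedContinuousFunction in
theorem MeasureTheory.Measure.ext_of_integral_exp_neg_pow_eq {κ₁ κ₂ : Measure (Ici (0:ℝ))}
    [IsFiniteMeasure κ₁] [IsFiniteMeasure κ₂]
    (h : ∀ n : ℕ, ∫ x, Real.exp (-x) ^ n ∂κ₁ = ∫ x, Real.exp (-x) ^ n ∂κ₂) : κ₁ = κ₂ := by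
  have : CompleteSpace (Ici (0:ℝ)) := isClosed_Ici.completeSpace_coe
  let e : Ici (0:ℝ) →ᵇ ℝ := ofNormedAddCommGroup (fun x => Real.exp (-x)) (by fun_prop) 1
    fun x => by
      rw [Real.norm_of_nonneg (Real.exp_pos _).le, Real.exp_le_one_iff, neg_nonpos]; exact x.2
  have he : star e = e := by ext; simp
  refine ext_of_forall_mem_subalgebra_integral_eq_of_pseudoEMetric_complete_countable
    (A := StarAlgebra.adjoin ℝ {e}) ?_ fun g hg => ?_
  · intro x y hxy
    refine ⟨_, ⟨_, StarSubalgebra.mem_map.mpr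
      ⟨e, StarAlgebra.self_mem_adjoin_singleton ℝ e, rfl⟩, rfl⟩, fun hexy => hxy ?_⟩
    exact Subtype.ext (by simpa [e] using hexy)
  · rw [← StarSubalgebra.mem_toSubalgebra, ← Subalgebra.mem_toSubmodule,
      StarAlgebra.adjoin_eq_span, Set.star_singleton, he, Set.union_self,
      ← Submonoid.powers_eq_closure] at hg
    induction hg using Submodule.span_induction with
    | mem g hg =>
      obtain ⟨n, rfl⟩ := hg
      simpa [e] using h n
    | zero => simp
    | add f g _ _ hf hg =>
      simp only [BoundedContinuousFunction.add_apply]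
      rw [integral_add (f.integrable _) (g.integrable _),
        integral_add (f.integrable _) (g.integrable _), hf, hg]
    | smul c f _ hf =>
      simp only [BoundedContinuousFunction.smul_apply, smul_eq_mul, integral_const_mul, hf]

theorem laplaceTransform_zero (m : Measure ℝ) : laplaceTransform m 0 = m univ := by
  simp [laplaceTransform]

theorem laplaceTransform_withDensity_ofReal {m : Measure ℝ} {f : ℝ → ℝ} (hf : AEMeasurable f m)
    (hf₀ : 0 ≤ᵐ[m] f) (s : ℝ) :
    laplaceTransform (m.withDensity fun β => ENNReal.ofReal (f β)) s
      = ∫⁻ β, ENNReal.ofReal (f β * Real.exp (-β * s)) ∂m := by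
  rw [laplaceTransform, lintegral_withDensity_eq_lintegral_mul₀ hf.ennreal_ofReal (by fun_prop)]
  refine lintegral_congr_ae ?_
  filter_upwards [hf₀] with β hβ
  rw [Pi.mul_apply, ENNReal.ofReal_mul hβ]

theorem laplaceTransform_withDensity_ofReal_div {m : Measure ℝ} {f g : ℝ → ℝ}
    (hf : AEMeasurable f m) (hg : AEMeasurable g m) (hf₀ : 0 ≤ᵐ[m] f) (hg₀ : 0 ≤ᵐ[m] g) (s : ℝ) :
    laplaceTransform (m.withDensity fun β => ENNReal.ofReal (f β / g β)) s
      = ∫⁻ β, ENNReal.ofReal (f β * Real.exp (-β * s) / g β) ∂m := by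
  rw [laplaceTransform_withDensity_ofReal (f := fun β => f β / g β) (hf.div hg)
    (by filter_upwards [hf₀, hg₀] with β hfβ hgβ using div_nonneg hfβ hgβ)]
  simp_rw [div_mul_eq_mul_div]

theorem laplaceTransform_withDensity_exp_neg_mul (m : Measure ℝ) (s₀ s : ℝ) :
    laplaceTransform (m.withDensity fun β => ENNReal.ofReal (Real.exp (-β * s₀))) s
      = laplaceTransform m (s + s₀) := by
  rw [laplaceTransform_withDensity_ofReal (by fun_prop) (.of_forall fun β => (Real.exp_pos _).le),
    laplaceTransform]
  refine lintegral_congr fun β => ?_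
  rw [← Real.exp_add]
  ring_nf

theorem isFiniteMeasure_withDensity_exp_neg_mul {m : Measure ℝ} {s₀ : ℝ}
    (h : laplaceTransform m s₀ ≠ ∞) :
    IsFiniteMeasure (m.withDensity fun β => ENNReal.ofReal (Real.exp (-β * s₀))) := by
  refine ⟨?_⟩
  rwa [← laplaceTransform_zero, laplaceTransform_withDensity_exp_neg_mul, zero_add,
    lt_top_iff_ne_top]

theorem withDensity_exp_neg_mul_withDensity_inv (m : Measure ℝ) (s₀ : ℝ) :
    (m.withDensity fun β => ENNReal.ofReal (Real.exp (-β * s₀))).withDensity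
      (fun β => (ENNReal.ofReal (Real.exp (-β * s₀)))⁻¹) = m :=
  withDensity_inv_same (by fun_prop) (.of_forall fun _ => by simp [Real.exp_pos])
    (.of_forall fun _ => ofReal_ne_top)

theorem sFinite_of_laplaceTransform_ne_top {m : Measure ℝ} {s₀ : ℝ}
    (h : laplaceTransform m s₀ ≠ ∞) : SFinite m := by
  have := isFiniteMeasure_withDensity_exp_neg_mul h
  rw [← withDensity_exp_neg_mul_withDensity_inv m s₀]
  infer_instance

theorem MeasureTheory.Measure.ext_of_laplaceTransform_natCast_eq {ζ₁ ζ₂ : Measure ℝ}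
    [IsFiniteMeasure ζ₁] [IsFiniteMeasure ζ₂] (h₁ : ζ₁ (Iio 0) = 0) (h₂ : ζ₂ (Iio 0) = 0)
    (h : ∀ n : ℕ, laplaceTransform ζ₁ n = laplaceTransform ζ₂ n) : ζ₁ = ζ₂ := by
  have hmap : ∀ ζ : Measure ℝ, ζ (Iio 0) = 0 →
      (ζ.comap ((↑) : Ici (0:ℝ) → ℝ)).map (↑) = ζ := fun ζ hζ => by
    rw [map_comap_subtype_coe measurableSet_Ici, Measure.restrict_eq_self_of_ae_mem]
    rw [ae_iff]
    convert hζ using 2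
    ext
    simp
  have hmoment : ∀ (ζ : Measure ℝ) [IsFiniteMeasure ζ], ζ (Iio 0) = 0 → ∀ n : ℕ,
      ∫ x : Ici (0:ℝ), Real.exp (-x) ^ n ∂(ζ.comap (↑)) = (laplaceTransform ζ n).toReal := by
    intro ζ _ hζ n
    have := (MeasurableEmbedding.subtype_coe (measurableSet_Ici (a := (0:ℝ)))).integral_map
      (μ := ζ.comap (↑)) fun β => Real.exp (-β) ^ n
    rw [← this, hmap ζ hζ,
      integral_eq_lintegral_of_nonneg_ae (.of_forall fun _ => by positivity) (by fun_prop),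
      laplaceTransform]
    simp_rw [← Real.exp_nat_mul, mul_neg, neg_mul, mul_comm]
  rw [← hmap ζ₁ h₁, ← hmap ζ₂ h₂]
  congr 1
  exact Measure.ext_of_integral_exp_neg_pow_eq fun n => by rw [hmoment ζ₁ h₁, hmoment ζ₂ h₂, h]

theorem MeasureTheory.Measure.ext_of_laplaceTransform_eq {m₁ m₂ : Measure ℝ} (h₁ : m₁ (Iio 0) = 0)
    (h₂ : m₂ (Iio 0) = 0) {s₀ : ℝ} (hfin : laplaceTransform m₁ s₀ ≠ ∞)
    (h : ∀ s ≥ s₀, laplaceTransform m₁ s = laplaceTransform m₂ s) : m₁ = m₂ := by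
  have := isFiniteMeasure_withDensity_exp_neg_mul hfin
  have := isFiniteMeasure_withDensity_exp_neg_mul (h s₀ le_rfl ▸ hfin)
  rw [← withDensity_exp_neg_mul_withDensity_inv m₁ s₀,
    ← withDensity_exp_neg_mul_withDensity_inv m₂ s₀]
  congr 1
  refine Measure.ext_of_laplaceTransform_natCast_eq (withDensity_absolutelyContinuous _ _ h₁)
    (withDensity_absolutelyContinuous _ _ h₂) fun n => ?_
  simp only [laplaceTransform_withDensity_exp_neg_mul]
  exact h _ (le_add_of_nonneg_left n.cast_nonneg)

theorem measurable_partitionFunction {X : Type*} [MeasurableSpace X] (μ : Measure X) [SFinite μ]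
    {H : X → ℝ} (hH : Measurable H) : Measurable (partitionFunction μ H) :=
  (StronglyMeasurable.integral_prod_right (f := fun β x => Real.exp (-β * H x))
    (by fun_prop)).measurable

theorem laplaceTransform_withDensity_partitionFunction {Y : Type*} [MeasurableSpace Y]
    (μ : Measure Y) [SFinite μ] {H : Y → ℝ} (hH : Measurable H) (m : Measure ℝ) [SFinite m]
    (hint : ∀ᵐ β ∂m, Integrable (fun y => Real.exp (-β * H y)) μ) (s : ℝ) :
    laplaceTransform (m.withDensity fun β => ENNReal.ofReal (partitionFunction μ H β)) s
      = ∫⁻ y, laplaceTransform m (s + H y) ∂μ := by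
  rw [laplaceTransform_withDensity_ofReal (measurable_partitionFunction μ hH).aemeasurable
    (.of_forall fun β => integral_nonneg fun _ => (Real.exp_pos _).le)]
  calc ∫⁻ β, ENNReal.ofReal (partitionFunction μ H β * Real.exp (-β * s)) ∂m
      = ∫⁻ β, ∫⁻ y, ENNReal.ofReal (Real.exp (-β * (s + H y))) ∂μ ∂m := by
        refine lintegral_congr_ae ?_
        filter_upwards [hint] with β hβ
        rw [partitionFunction, ← integral_mul_const, ofReal_integral_eq_lintegral_ofReal
          (hβ.mul_const _) (.of_forall fun _ => by positivity)]
        refine lintegral_congr fun y => ?_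
        rw [← Real.exp_add]
        ring_nf
    _ = ∫⁻ y, laplaceTransform m (s + H y) ∂μ :=
        lintegral_lintegral_swap (by fun_prop)

theorem withDensity_partitionFunction_eq_of_laplaceTransform_eq {Y : Type*} [MeasurableSpace Y]
    (μ : Measure Y) [SFinite μ] {H : Y → ℝ} (hH : Measurable H) {ν m : Measure ℝ} [SFinite ν]
    (hν : ν (Iio 0) = 0) (hint : ∀ᵐ β ∂ν, Integrable (fun y => Real.exp (-β * H y)) μ)
    (hm : m (Iio 0) = 0) {s₀ : ℝ} (hfin : laplaceTransform m s₀ ≠ ∞)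
    (h : ∀ s ≥ s₀, ∫⁻ y, laplaceTransform ν (s + H y) ∂μ = laplaceTransform m s) :
    ν.withDensity (fun β => ENNReal.ofReal (partitionFunction μ H β)) = m := by
  have hL := laplaceTransform_withDensity_partitionFunction μ hH ν hint
  refine Measure.ext_of_laplaceTransform_eq (withDensity_absolutelyContinuous _ _ hν) hm
    (by rwa [hL, h s₀ le_rfl]) fun s hs => by rw [hL, h s hs]

theorem eq_withDensity_div_of_withDensity_eq {α : Type*} [MeasurableSpace α] {m m' : Measure α}
    {f g : α → ℝ} (hf : AEMeasurable f m') (hg : Measurable g) (hgm : ∀ᵐ x ∂m, 0 < g x)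
    (hgm' : ∀ᵐ x ∂m', 0 < g x)
    (h : m.withDensity (fun x => ENNReal.ofReal (g x))
      = m'.withDensity fun x => ENNReal.ofReal (f x)) :
    m = m'.withDensity fun x => ENNReal.ofReal (f x / g x) := by
  have hm := withDensity_inv_same hg.ennreal_ofReal (by simpa using hgm)
    (.of_forall fun _ => ofReal_ne_top)
  rw [h, ← withDensity_mul₀ hf.ennreal_ofReal hg.ennreal_ofReal.aemeasurable.fun_inv] at hm
  rw [← hm]
  refine withDensity_congr_ae ?_
  filter_upwards [hgm'] with x hx
  rw [Pi.mul_apply, ENNReal.ofReal_div_of_pos hx, div_eq_mul_inv]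

theorem closure_of_superstatistics_microstate_general
    {X Y : Type*} [MeasurableSpace X] [MeasurableSpace Y]
    (μA : Measure X) (μB : Measure Y) [SigmaFinite μA] [SigmaFinite μB]
    (HA : X → ℝ) (HB : Y → ℝ) (hHAmeas : Measurable HA) (hHBmeas : Measurable HB)
    (hHArange : Set.range HA = Ioi (0:ℝ))
    (ZA ZB : ℝ → ℝ)
    (hZA : ∀ β, ZA β = ∫ x, Real.exp (-β * HA x) ∂μA)
    (hZB : ∀ β, ZB β = ∫ y, Real.exp (-β * HB y) ∂μB)
    (hZBint : ∀ β > (0:ℝ), Integrable (fun y => Real.exp (-β * HB y)) μB)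
    (hZApos : ∀ β > (0:ℝ), 0 < ZA β) (hZBpos : ∀ β > (0:ℝ), 0 < ZB β)
    (ν : Measure ℝ) (hν : ν (Iic 0) = 0)
    (ρ : ℝ → ℝ≥0∞)
    (hρ : ∀ E, ρ E = ∫⁻ β, ENNReal.ofReal (Real.exp (-β * E)) ∂ν)
    (hρfin : ∀ E > (0:ℝ), ρ E < ⊤)
    (P : ℝ → ℝ) (hPmeas : Measurable P) (hP0 : ∀ β, 0 ≤ P β)
    (hPfin : ∀ ε > (0:ℝ),
      ∫⁻ β in Ioi (0:ℝ), ENNReal.ofReal (P β * Real.exp (-β * ε) / ZA β) < ⊤)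
    (hmarg : ∀ x, ∫⁻ y, ρ (HA x + HB y) ∂μB
      = ∫⁻ β in Ioi (0:ℝ), ENNReal.ofReal (P β * Real.exp (-β * HA x) / ZA β)) :
    ν = (volume.restrict (Ioi (0:ℝ))).withDensity
        (fun β => ENNReal.ofReal (P β) / (ENNReal.ofReal (ZA β) * ENNReal.ofReal (ZB β)))
    ∧ ∀ x y, ρ (HA x + HB y)
        = ∫⁻ β in Ioi (0:ℝ),
            ENNReal.ofReal (P β * Real.exp (-β * (HA x + HB y)) / (ZA β * ZB β)) := by
  obtain rfl : ZA = partitionFunction μA HA := funext hZA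
  obtain rfl : ZB = partitionFunction μB HB := funext hZB
  obtain rfl : ρ = laplaceTransform ν := funext hρ
  have hνpos : ∀ᵐ β ∂ν, 0 < β :=
    ae_iff.mpr (measure_mono_null (fun β (hβ : ¬0 < β) => not_lt.mp hβ) hν)
  have : SFinite ν := sFinite_of_laplaceTransform_ne_top (hρfin 1 one_pos).ne
  have hZAmeas := measurable_partitionFunction μA hHAmeas
  have hZBmeas := measurable_partitionFunction μB hHBmeas
  set σ := volume.restrict (Ioi (0:ℝ))
  have hσpos : ∀ᵐ β ∂σ, 0 < β := ae_restrict_mem measurableSet_Ioi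
  have hσL := laplaceTransform_withDensity_ofReal_div hPmeas.aemeasurable hZAmeas.aemeasurable
    (.of_forall hP0) (hσpos.mono fun β hβ => (hZApos β hβ).le)
  have htilt : ν.withDensity (fun β => ENNReal.ofReal (partitionFunction μB HB β))
      = σ.withDensity fun β => ENNReal.ofReal (P β / partitionFunction μA HA β) :=
    withDensity_partitionFunction_eq_of_laplaceTransform_eq μB hHBmeas
      (measure_mono_null Iio_subset_Iic_self hν) (hνpos.mono hZBint)
      (withDensity_absolutelyContinuous _ _ (by simp [σ, Iio_inter_Ioi]))
      (by rw [hσL]; exact (hPfin 1 one_pos).ne) fun s hs => by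
        obtain ⟨x, rfl⟩ : s ∈ range HA := hHArange ▸ one_pos.trans_le hs
        rw [hmarg x, hσL]
  have hνσ : ν = σ.withDensity fun β =>
      ENNReal.ofReal (P β / (partitionFunction μA HA β * partitionFunction μB HB β)) := by
    rw [eq_withDensity_div_of_withDensity_eq (by fun_prop) hZBmeas (hνpos.mono hZBpos)
      (hσpos.mono hZBpos) htilt]
    simp_rw [div_div]
  refine ⟨?_, fun x y => ?_⟩
  · rw [hνσ]
    refine withDensity_congr_ae (hσpos.mono fun β hβ => ?_)
    dsimp only
    rw [ENNReal.ofReal_div_of_pos (mul_pos (hZApos β hβ) (hZBpos β hβ)),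
      ENNReal.ofReal_mul (hZApos β hβ).le]
  · rw [hνσ, laplaceTransform_withDensity_ofReal_div hPmeas.aemeasurable
      (by fun_prop) (.of_forall hP0)
      (hσpos.mono fun β hβ => (mul_pos (hZApos β hβ) (hZBpos β hβ)).le)]

/-- **Closure theorem, microstate form.** Let `(X, μA)` and `(Y, μB)` be σ-finite
measure spaces with nonnegative measurable Hamiltonians `HA` (with range `(0,∞)`) and
`HB`, whose partition functions `ZA`, `ZB` are finite and strictly positive for `β > 0`.
Suppose the composite system is in a steady state with joint density
`p(x,y) = ρ(HA x + HB y)`, where `ρ` is the Laplace transform of a Borel measure `ν`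
on `(0,∞)`, finite for positive energies. If the marginal of subsystem `A` is
superstatistical with probability density `P` of inverse temperatures, then `ν` has
Lebesgue density `P(β)/(ZA(β)·ZB(β))`, and consequently the joint ensemble is the
superstatistical mixture with the same inverse temperature distribution `P`. -/
theorem closure_of_superstatistics_microstate
    {X Y : Type*} [MeasurableSpace X] [MeasurableSpace Y]
    (μA : Measure X) (μB : Measure Y) [SigmaFinite μA] [SigmaFinite μB]
    (HA : X → ℝ) (HB : Y → ℝ) (hHAmeas : Measurable HA) (hHBmeas : Measurable HB)
    (hHA0 : ∀ x, 0 ≤ HA x) (hHB0 : ∀ y, 0 ≤ HB y)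
    (hHArange : Set.range HA = Ioi (0:ℝ))
    (ZA ZB : ℝ → ℝ)
    (hZA : ∀ β, ZA β = ∫ x, Real.exp (-β * HA x) ∂μA)
    (hZB : ∀ β, ZB β = ∫ y, Real.exp (-β * HB y) ∂μB)
    (hZAint : ∀ β > (0:ℝ), Integrable (fun x => Real.exp (-β * HA x)) μA)
    (hZBint : ∀ β > (0:ℝ), Integrable (fun y => Real.exp (-β * HB y)) μB)
    (hZApos : ∀ β > (0:ℝ), 0 < ZA β) (hZBpos : ∀ β > (0:ℝ), 0 < ZB β)
    (ν : Measure ℝ) (hν : ν (Iic 0) = 0)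
    (ρ : ℝ → ℝ≥0∞)
    (hρ : ∀ E, ρ E = ∫⁻ β, ENNReal.ofReal (Real.exp (-β * E)) ∂ν)
    (hρfin : ∀ E > (0:ℝ), ρ E < ⊤)
    (P : ℝ → ℝ) (hPmeas : Measurable P) (hP0 : ∀ β, 0 ≤ P β)
    (hPnorm : ∫ β in Ioi (0:ℝ), P β = 1)
    (hPfin : ∀ ε > (0:ℝ),
      ∫⁻ β in Ioi (0:ℝ), ENNReal.ofReal (P β * Real.exp (-β * ε) / ZA β) < ⊤)
    (hmarg : ∀ x, ∫⁻ y, ρ (HA x + HB y) ∂μB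
      = ∫⁻ β in Ioi (0:ℝ), ENNReal.ofReal (P β * Real.exp (-β * HA x) / ZA β)) :
    ν = (volume.restrict (Ioi (0:ℝ))).withDensity
        (fun β => ENNReal.ofReal (P β) / (ENNReal.ofReal (ZA β) * ENNReal.ofReal (ZB β)))
    ∧ ∀ x y, ρ (HA x + HB y)
        = ∫⁻ β in Ioi (0:ℝ),
            ENNReal.ofReal (P β * Real.exp (-β * (HA x + HB y)) / (ZA β * ZB β)) :=
  closure_of_superstatistics_microstate_general μA μB HA HB hHAmeas hHBmeas hHArange ZA ZB hZA hZB
    hZBint hZApos hZBpos ν hν ρ hρ hρfin P hPmeas hP0 hPfin hmarg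
end

section
/- Non-canonical steady states cannot have Maxwellian velocity distributions. Let m > 0, and let Ω_B : (0,∞) → [0,∞) be measurable with Z_B(β) := ∫₀^∞ Ω_B(E) exp(−βE) dE finite and strictly positive for all β > 0. Let ν be a Borel measure on (0,∞) with ρ(E) := ∫₀^∞ exp(−βE) dν(β) finite for all E > 0, describing a steady state in which the single-particle momentum p ∈ ℝ³ has marginal density P(p) = ∫₀^∞ Ω_B(E′) ρ(|p|²/(2m) + E′) dE′. If there exists β₀ > 0 such that P(p) = (β₀/(2πm))^{3/2} · exp(−β₀ |p|²/(2m)) for every p ∈ ℝ³ (a Maxwellian distribution), then ν is the point mass ((β₀/(2πm))^{3/2}/Z_B(β₀)) · δ_{β₀}, so ρ(E) is proportional to exp(−β₀ E); i.e. the steady state is canonical. -/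
open MeasureTheory Set ENNReal

/-!
Put `μ := Z_B · ν`. Fubini turns the marginal at `‖p‖² = 2 m x` into `∫ e^{-βx} dμ(β)`, so the
Maxwellian hypothesis says `∫ e^{-βx} dμ(β) = C e^{-β₀x}` for all `x ≥ 0`, where
`C = (β₀/(2πm))^{3/2}`. Taking `x = 0, 1, 2`, the variable `e^{-β}` has the same mean and second
moment under `μ` as the constant `e^{-β₀}`, hence zero variance: `μ`, and with it `ν` (as
`Z_B > 0` on `(0, ∞)`), is carried by `{β₀}`. The mass `ν {β₀} = C / Z_B(β₀)` is then read off
at `x = 0`.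
-/

lemma sigmaFinite_of_lintegral_ne_top {α : Type*} [MeasurableSpace α] {μ : Measure α}
    {f : α → ℝ≥0∞} (hf : Measurable f) (hf_ne_zero : ∀ᵐ x ∂μ, f x ≠ 0)
    (hf_ne_top : ∀ᵐ x ∂μ, f x ≠ ∞) (hint : ∫⁻ x, f x ∂μ ≠ ∞) : SigmaFinite μ := by
  have := isFiniteMeasure_withDensity hint
  have : SigmaFinite ((μ.withDensity f).withDensity fun x ↦ (f x)⁻¹) :=
    SigmaFinite.withDensity_of_ne_top <| withDensity_absolutelyContinuous μ f <|
      hf_ne_zero.mono fun _ hx ↦ ENNReal.inv_ne_top.2 hx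
  rwa [withDensity_inv_same hf hf_ne_zero hf_ne_top] at this

lemma measurable_lintegral_ofReal_mul_exp {Ω : ℝ → ℝ} (hΩ : Measurable Ω) (μ : Measure ℝ)
    [SFinite μ] : Measurable fun β ↦ ∫⁻ E, ENNReal.ofReal (Ω E * Real.exp (-β * E)) ∂μ :=
  Measurable.lintegral_prod_right (by fun_prop)

lemma lintegral_ofReal_mul_lintegral_exp_shift (μ ν : Measure ℝ) [SFinite μ] [SFinite ν]
    {Ω : ℝ → ℝ} (hΩ : Measurable Ω) (x : ℝ) :
    ∫⁻ E, ENNReal.ofReal (Ω E) * ∫⁻ β, ENNReal.ofReal (Real.exp (-β * (x + E))) ∂ν ∂μ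
      = ∫⁻ β, ENNReal.ofReal (Real.exp (-β * x))
          * ∫⁻ E, ENNReal.ofReal (Ω E * Real.exp (-β * E)) ∂μ ∂ν := by
  have hsplit : ∀ β E, ENNReal.ofReal (Ω E) * ENNReal.ofReal (Real.exp (-β * (x + E)))
      = ENNReal.ofReal (Real.exp (-β * x)) * ENNReal.ofReal (Ω E * Real.exp (-β * E)) := by
    intro β E
    rw [ENNReal.ofReal_mul' (Real.exp_nonneg _), mul_add, Real.exp_add,
      ENNReal.ofReal_mul (Real.exp_nonneg _)]
    ring
  simp_rw [← lintegral_const_mul' _ _ ofReal_ne_top, hsplit]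
  exact lintegral_lintegral_swap (by fun_prop)

lemma lintegral_exp_withDensity_of_maxwellian {V : Type*} [NormedAddCommGroup V]
    [NormedSpace ℝ V] [Nontrivial V] {m : ℝ} (hm : 0 < m) {ΩB : ℝ → ℝ} (hΩB : Measurable ΩB)
    {ZB : ℝ → ℝ≥0∞}
    (hZB : ∀ β, ZB β = ∫⁻ E in Ioi (0:ℝ), ENNReal.ofReal (ΩB E * Real.exp (-β * E)))
    {ν : Measure ℝ} [SFinite ν] {ρ : ℝ → ℝ≥0∞}
    (hρ : ∀ E, ρ E = ∫⁻ β, ENNReal.ofReal (Real.exp (-β * E)) ∂ν) {C β₀ : ℝ}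
    (hmaxwell : ∀ p : V, ∫⁻ E' in Ioi (0:ℝ), ENNReal.ofReal (ΩB E') * ρ (‖p‖ ^ 2 / (2 * m) + E')
      = ENNReal.ofReal (C * Real.exp (-β₀ * ‖p‖ ^ 2 / (2 * m))))
    {x : ℝ} (hx : 0 ≤ x) :
    ∫⁻ β, ENNReal.ofReal (Real.exp (-β * x)) ∂ν.withDensity ZB
      = ENNReal.ofReal C * ENNReal.ofReal (Real.exp (-β₀ * x)) := by
  obtain ⟨p, hp⟩ := exists_norm_eq V (Real.sqrt_nonneg (2 * m * x))
  have hpx : ‖p‖ ^ 2 / (2 * m) = x := by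
    rw [hp, Real.sq_sqrt (by positivity)]
    field_simp
  have hP := hmaxwell p
  rw [mul_div_assoc, hpx, ENNReal.ofReal_mul' (Real.exp_nonneg _)] at hP
  have hZBm : Measurable ZB := funext hZB ▸ measurable_lintegral_ofReal_mul_exp hΩB _
  rw [← hP, lintegral_withDensity_eq_lintegral_mul _ hZBm (by fun_prop)]
  simp_rw [hρ]
  rw [lintegral_ofReal_mul_lintegral_exp_shift _ _ hΩB]
  exact lintegral_congr fun β ↦ by rw [Pi.mul_apply, hZB, mul_comm]

lemma ae_eq_const_of_lintegral_eq_of_lintegral_sq_eq {α : Type*} [MeasurableSpace α]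
    {μ : Measure α} {f : α → ℝ} (hf : Measurable f) (hf0 : ∀ x, 0 ≤ f x) {a : ℝ} (ha : 0 ≤ a)
    {c : ℝ≥0∞} (hc : c ≠ ∞) (h0 : μ univ = c)
    (h1 : ∫⁻ x, ENNReal.ofReal (f x) ∂μ = c * ENNReal.ofReal a)
    (h2 : ∫⁻ x, ENNReal.ofReal (f x ^ 2) ∂μ = c * ENNReal.ofReal (a ^ 2)) :
    f =ᵐ[μ] fun _ ↦ a := by
  have hpt : ∀ x, ENNReal.ofReal ((f x - a) ^ 2) + ENNReal.ofReal (2 * a) * ENNReal.ofReal (f x)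
      = ENNReal.ofReal (f x ^ 2) + ENNReal.ofReal (a ^ 2) := by
    intro x
    have h2af : 0 ≤ 2 * a * f x := by have := hf0 x; positivity
    rw [← ENNReal.ofReal_mul (by positivity), ← ENNReal.ofReal_add (by positivity) h2af,
      ← ENNReal.ofReal_add (by positivity) (by positivity)]
    ring_nf
  have hvar : ∫⁻ x, ENNReal.ofReal ((f x - a) ^ 2) ∂μ + c * ENNReal.ofReal a ^ 2 * 2
      = 0 + c * ENNReal.ofReal a ^ 2 * 2 := by
    have := lintegral_congr (μ := μ) hpt
    rw [lintegral_add_left (by fun_prop), lintegral_const_mul _ (by fun_prop), h1,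
      lintegral_add_right _ measurable_const, lintegral_const, h2, h0] at this
    rw [ENNReal.ofReal_mul zero_le_two, ENNReal.ofReal_pow ha, ENNReal.ofReal_ofNat] at this
    rw [zero_add]
    convert this using 1 <;> ring
  have hzero := (ENNReal.add_left_inj (by finiteness)).1 hvar
  filter_upwards [(lintegral_eq_zero_iff (by fun_prop)).1 hzero] with x hx
  have : (f x - a) ^ 2 = 0 := le_antisymm (ENNReal.ofReal_eq_zero.1 hx) (sq_nonneg _)
  linarith [pow_eq_zero_iff (n := 2) two_ne_zero |>.1 this]

theorem noncanonical_no_maxwellian_general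
    (m : ℝ) (hm : 0 < m)
    (ΩB : ℝ → ℝ) (hΩB : Measurable ΩB)
    (ZB : ℝ → ℝ≥0∞)
    (hZB : ∀ β, ZB β = ∫⁻ E in Ioi (0:ℝ), ENNReal.ofReal (ΩB E * Real.exp (-β * E)))
    (hZBpos : ∀ β > (0:ℝ), 0 < ZB β) (hZBfin : ∀ β > (0:ℝ), ZB β < ⊤)
    (ν : Measure ℝ) (hν : ν (Iic 0) = 0)
    (ρ : ℝ → ℝ≥0∞)
    (hρ : ∀ E, ρ E = ∫⁻ β, ENNReal.ofReal (Real.exp (-β * E)) ∂ν)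
    (hρfin : ∀ E > (0:ℝ), ρ E < ⊤)
    (β₀ : ℝ) (hβ₀ : 0 < β₀)
    (hmaxwell : ∀ p : EuclideanSpace ℝ (Fin 3),
      ∫⁻ E' in Ioi (0:ℝ), ENNReal.ofReal (ΩB E') * ρ (‖p‖ ^ 2 / (2 * m) + E')
        = ENNReal.ofReal ((β₀ / (2 * Real.pi * m)) ^ ((3:ℝ)/2)
            * Real.exp (-β₀ * ‖p‖ ^ 2 / (2 * m)))) :
    ν = (ENNReal.ofReal ((β₀ / (2 * Real.pi * m)) ^ ((3:ℝ)/2)) / ZB β₀)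
          • Measure.dirac β₀
    ∧ ∀ E > (0:ℝ),
        ρ E = (ENNReal.ofReal ((β₀ / (2 * Real.pi * m)) ^ ((3:ℝ)/2)) / ZB β₀)
                * ENNReal.ofReal (Real.exp (-β₀ * E)) := by
  set C := (β₀ / (2 * Real.pi * m)) ^ ((3:ℝ)/2)
  -- Fubini needs `ν` to be σ-finite, which `ρ 1 < ∞` provides.
  have : SigmaFinite ν :=
    sigmaFinite_of_lintegral_ne_top
      (by fun_prop : Measurable fun β : ℝ ↦ ENNReal.ofReal (Real.exp (-β * 1)))
      (ae_of_all _ fun _ ↦ by simp [Real.exp_pos])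
      (ae_of_all _ fun _ ↦ ofReal_ne_top) (hρ 1 ▸ (hρfin 1 one_pos).ne)
  have hZBm : Measurable ZB := funext hZB ▸ measurable_lintegral_ofReal_mul_exp hΩB _
  have hmoment {x : ℝ} (hx : 0 ≤ x) :=
    lintegral_exp_withDensity_of_maxwellian hm hΩB hZB hρ hmaxwell hx
  have hexp : (fun β ↦ Real.exp (-β)) =ᵐ[ν.withDensity ZB] fun _ ↦ Real.exp (-β₀) := by
    refine ae_eq_const_of_lintegral_eq_of_lintegral_sq_eq (by fun_prop)
      (fun _ ↦ (Real.exp_pos _).le) (Real.exp_pos _).le (ofReal_ne_top (r := C)) ?_ ?_ ?_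
    · simpa using hmoment le_rfl
    · simpa using hmoment zero_le_one
    · simpa [← Real.exp_nat_mul, mul_comm] using hmoment zero_le_two
  have hae : ∀ᵐ β ∂ν, β = β₀ := by
    filter_upwards [(ae_withDensity_iff hZBm).1 hexp, measure_eq_zero_iff_ae_notMem.1 hν]
      with β hβ hβpos
    exact neg_injective (Real.exp_injective (hβ (hZBpos β (by simpa using hβpos)).ne'))
  have hν_eq : ν = ν {β₀} • Measure.dirac β₀ :=
    (Measure.restrict_eq_self_of_ae_mem hae).symm.trans (Measure.restrict_singleton ν β₀)
  have hνβ₀ : ν {β₀} = ENNReal.ofReal C / ZB β₀ := by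
    have hmass := hmoment le_rfl
    simp only [mul_zero, Real.exp_zero, ENNReal.ofReal_one, mul_one, lintegral_one,
      withDensity_apply _ MeasurableSet.univ, Measure.restrict_univ] at hmass
    rw [hν_eq, lintegral_smul_measure, lintegral_dirac, smul_eq_mul] at hmass
    rw [ENNReal.eq_div_iff (hZBpos β₀ hβ₀).ne' (hZBfin β₀ hβ₀).ne, mul_comm, hmass]
  refine ⟨hν_eq.trans (by rw [hνβ₀]), fun E _ ↦ ?_⟩
  rw [hρ, hν_eq, lintegral_smul_measure, lintegral_dirac, hνβ₀, smul_eq_mul]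

/-- **Non-canonical steady states cannot have Maxwellian velocity distributions.**
Let `m > 0`, let `Ω_B` be the density of states of the remaining degrees of freedom
with partition function `Z_B(β)` finite and positive for `β > 0`, and let `ν` be a
Borel measure on `(0,∞)` whose Laplace transform `ρ(E) = ∫ exp(-βE) dν(β)` is finite
for `E > 0`, describing a steady state in which the single-particle momentum `p ∈ ℝ³`
has marginal density `P(p) = ∫₀^∞ Ω_B(E') ρ(‖p‖²/(2m) + E') dE'`. If this marginal is
Maxwellian at inverse temperature `β₀`, then `ν` is the point mass
`((β₀/(2πm))^{3/2}/Z_B(β₀)) · δ_{β₀}`, so `ρ(E)` is proportional to `exp(-β₀E)`: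
the steady state is canonical. -/
theorem noncanonical_no_maxwellian
    (m : ℝ) (hm : 0 < m)
    (ΩB : ℝ → ℝ) (hΩB : Measurable ΩB) (hΩB0 : ∀ E, 0 ≤ ΩB E)
    (ZB : ℝ → ℝ≥0∞)
    (hZB : ∀ β, ZB β = ∫⁻ E in Ioi (0:ℝ), ENNReal.ofReal (ΩB E * Real.exp (-β * E)))
    (hZBpos : ∀ β > (0:ℝ), 0 < ZB β) (hZBfin : ∀ β > (0:ℝ), ZB β < ⊤)
    (ν : Measure ℝ) (hν : ν (Iic 0) = 0)
    (ρ : ℝ → ℝ≥0∞)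
    (hρ : ∀ E, ρ E = ∫⁻ β, ENNReal.ofReal (Real.exp (-β * E)) ∂ν)
    (hρfin : ∀ E > (0:ℝ), ρ E < ⊤)
    (β₀ : ℝ) (hβ₀ : 0 < β₀)
    (hmaxwell : ∀ p : EuclideanSpace ℝ (Fin 3),
      ∫⁻ E' in Ioi (0:ℝ), ENNReal.ofReal (ΩB E') * ρ (‖p‖ ^ 2 / (2 * m) + E')
        = ENNReal.ofReal ((β₀ / (2 * Real.pi * m)) ^ ((3:ℝ)/2)
            * Real.exp (-β₀ * ‖p‖ ^ 2 / (2 * m)))) :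
    ν = (ENNReal.ofReal ((β₀ / (2 * Real.pi * m)) ^ ((3:ℝ)/2)) / ZB β₀)
          • Measure.dirac β₀
    ∧ ∀ E > (0:ℝ),
        ρ E = (ENNReal.ofReal ((β₀ / (2 * Real.pi * m)) ^ ((3:ℝ)/2)) / ZB β₀)
                * ENNReal.ofReal (Real.exp (-β₀ * E)) :=
  noncanonical_no_maxwellian_general m hm ΩB hΩB ZB hZB hZBpos hZBfin ν hν ρ hρ hρfin β₀ hβ₀
    hmaxwell
end

section
/- Fundamental inverse temperature of a marginal ensemble. Let f : (0,∞) → [0,∞) be measurable with ρ(E) := ∫₀^∞ f(β) exp(−βE) dβ finite and strictly positive for every E > 0, and let β_F(E) := −ρ′(E)/ρ(E). Let Ω_B : (0,∞) → [0,∞) be measurable, not almost everywhere zero, such that ρ_A(ε) := ∫₀^∞ Ω_B(E′) ρ(ε + E′) dE′ and ∫₀^∞ Ω_B(E′) · (−ρ′(ε + E′)) dE′ are finite for every ε > 0. Then ρ_A is differentiable on (0,∞) with ρ_A′(ε) = ∫₀^∞ Ω_B(E′) ρ′(ε + E′) dE′, and the fundamental inverse temperature of the marginal ensemble satisfies β_F^{(A)}(ε)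 := −ρ_A′(ε)/ρ_A(ε) = ∫₀^∞ Ω_B(E′) β_F(ε + E′) ρ̣(ε + E′) dE′ / ρ_A(ε); i.e. β_F^{(A)}(ε) is the expectation of β_F(E) under the conditional density P(E|ε) := Ω_B(E−ε) ρ(E)/ρ_A(ε) supported on E > ε. -/
/-!
For `E > 0` the Laplace integral `ρ(E) = ∫ f(β) e^{-βE} dβ` can be differentiated under the
integral sign, since `β e^{-βx} ≤ (4/E) e^{-βE/4}` for `x ≥ E/2`; thus
`-ρ'(E) = ∫ β f(β) e^{-βE} dβ`, which for `f ≥ 0` is nonnegative and decreasing in `E`.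
Consequently `|ρ'(x + E')| ≤ |ρ'(ε/2 + E')|` for `x > ε/2`, an integrable bound (against `Ω_B`)
that lets us differentiate `ρ_A` under the integral sign as well. The formula for `β_F^{(A)}`
is then the pointwise identity `β_F ρ = -ρ'`.
-/

open MeasureTheory Set

lemma mul_exp_neg_mul_le {β c x : ℝ} (hβ : 0 ≤ β) (hc : 0 < c) (hx : c ≤ x) :
    β * Real.exp (-β * x) ≤ 2 / c * Real.exp (-β * (c / 2)) := by
  have hlin : β * (c / 2) ≤ Real.exp (β * (c / 2)) := by
    linarith [Real.add_one_le_exp (β * (c / 2))]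
  calc β * Real.exp (-β * x) ≤ β * Real.exp (-β * c) := by
        gcongr β * ?_; exact Real.exp_le_exp.2 (by nlinarith)
    _ = 2 / c * (β * (c / 2) * Real.exp (-β * c)) := by field_simp
    _ ≤ 2 / c * (Real.exp (β * (c / 2)) * Real.exp (-β * c)) := by gcongr
    _ = 2 / c * Real.exp (-β * (c / 2)) := by rw [← Real.exp_add]; ring_nf

section Laplace

variable {f : ℝ → ℝ}

lemma norm_mul_laplace_integrand_le {β c x : ℝ} (hβ : 0 ≤ β) (hc : 0 < c) (hx : c ≤ x) :
    ‖β * (f β * Real.exp (-β * x))‖ ≤ 2 / c * ‖f β * Real.exp (-β * (c / 2))‖ := by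
  simp only [Real.norm_eq_abs, abs_mul, abs_of_nonneg hβ, Real.abs_exp]
  calc β * (|f β| * Real.exp (-β * x)) = |f β| * (β * Real.exp (-β * x)) := by ring
    _ ≤ |f β| * (2 / c * Real.exp (-β * (c / 2))) :=
        mul_le_mul_of_nonneg_left (mul_exp_neg_mul_le hβ hc hx) (abs_nonneg _)
    _ = 2 / c * (|f β| * Real.exp (-β * (c / 2))) := by ring

lemma integrableOn_mul_laplace_integrand
    (hf : ∀ E > (0:ℝ), IntegrableOn (fun β => f β * Real.exp (-β * E)) (Ioi 0))
    {E : ℝ} (hE : 0 < E) :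
    IntegrableOn (fun β => β * (f β * Real.exp (-β * E))) (Ioi 0) := by
  refine Integrable.mono' ((hf (E / 2) (by positivity)).norm.const_mul (2 / E))
    (continuous_id.aestronglyMeasurable.mul (hf E hE).aestronglyMeasurable) ?_
  filter_upwards [ae_restrict_mem measurableSet_Ioi] with β hβ
  exact norm_mul_laplace_integrand_le (le_of_lt hβ) hE le_rfl

lemma hasDerivAt_laplace
    (hf : ∀ E > (0:ℝ), IntegrableOn (fun β => f β * Real.exp (-β * E)) (Ioi 0))
    {E : ℝ} (hE : 0 < E) :
    HasDerivAt (fun x => ∫ β in Ioi 0, f β * Real.exp (-β * x))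
      (-∫ β in Ioi 0, β * (f β * Real.exp (-β * E))) E := by
  have hc : 0 < E / 2 := half_pos hE
  rw [← integral_neg]
  refine (hasDerivAt_integral_of_dominated_loc_of_deriv_le
    (F := fun x β => f β * Real.exp (-β * x))
    (F' := fun x β => -(β * (f β * Real.exp (-β * x))))
    (Ioi_mem_nhds (half_lt_self hE))
    ?_ (hf E hE) (integrableOn_mul_laplace_integrand hf hE).neg.aestronglyMeasurable ?_
    ((hf (E / 2 / 2) (by positivity)).norm.const_mul (2 / (E / 2))) ?_).2
  · filter_upwards [Ioi_mem_nhds hE] with x hx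
    exact (hf x hx).aestronglyMeasurable
  · filter_upwards [ae_restrict_mem measurableSet_Ioi] with β hβ x hx
    rw [norm_neg]
    exact norm_mul_laplace_integrand_le (le_of_lt hβ) hc (le_of_lt hx)
  · filter_upwards with β x _
    exact ((((hasDerivAt_id x).const_mul (-β)).exp).const_mul (f β)).congr_deriv
      (by simp only [id]; ring)

lemma abs_deriv_laplace_antitoneOn (hf0 : ∀ β > (0:ℝ), 0 ≤ f β)
    (hf : ∀ E > (0:ℝ), IntegrableOn (fun β => f β * Real.exp (-β * E)) (Ioi 0)) :
    AntitoneOn (fun E => |deriv (fun x => ∫ β in Ioi 0, f β * Real.exp (-β * x)) E|)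
      (Ioi 0) := by
  have hnonneg : ∀ β ∈ Ioi (0:ℝ), ∀ E, 0 ≤ β * (f β * Real.exp (-β * E)) :=
    fun β hβ E => mul_nonneg (le_of_lt hβ) (mul_nonneg (hf0 β hβ) (Real.exp_nonneg _))
  intro a ha b hb hab
  simp only [(hasDerivAt_laplace hf ha).deriv, (hasDerivAt_laplace hf hb).deriv, abs_neg,
    abs_of_nonneg (setIntegral_nonneg measurableSet_Ioi fun β hβ => hnonneg β hβ _)]
  refine setIntegral_mono_on (integrableOn_mul_laplace_integrand hf hb)
    (integrableOn_mul_laplace_integrand hf ha) measurableSet_Ioi fun β (hβ : 0 < β) => ?_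
  have hfβ := hf0 β hβ
  have hexponent : -β * b ≤ -β * a := by nlinarith
  gcongr

end Laplace

lemma hasDerivAt_setIntegral_mul_comp_add {w g : ℝ → ℝ}
    (hg : ∀ x > (0:ℝ), DifferentiableAt ℝ g x)
    (hg' : AntitoneOn (fun x => |deriv g x|) (Ioi 0))
    (hint : ∀ x > (0:ℝ), IntegrableOn (fun t => w t * g (x + t)) (Ioi 0))
    (hint' : ∀ x > (0:ℝ), IntegrableOn (fun t => w t * deriv g (x + t)) (Ioi 0))
    {ε : ℝ} (hε : 0 < ε) :
    HasDerivAt (fun x => ∫ t in Ioi 0, w t * g (x + t))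
      (∫ t in Ioi 0, w t * deriv g (ε + t)) ε := by
  refine (hasDerivAt_integral_of_dominated_loc_of_deriv_le
    (F := fun x t => w t * g (x + t)) (F' := fun x t => w t * deriv g (x + t))
    (Ioi_mem_nhds (half_lt_self hε))
    ?_ (hint ε hε) (hint' ε hε).aestronglyMeasurable ?_
    (hint' (ε / 2) (half_pos hε)).norm ?_).2
  · filter_upwards [Ioi_mem_nhds hε] with x hx
    exact (hint x hx).aestronglyMeasurable
  · filter_upwards [ae_restrict_mem measurableSet_Ioi] with t (ht : 0 < t) x (hx : ε / 2 < x)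
    simp only [norm_mul, Real.norm_eq_abs]
    gcongr |w t| * ?_
    exact hg' (by simp only [mem_Ioi]; positivity) (by simp only [mem_Ioi]; linarith)
      (by linarith)
  · filter_upwards [ae_restrict_mem measurableSet_Ioi] with t (ht : 0 < t) x (hx : ε / 2 < x)
    have hxt : 0 < x + t := by linarith
    simpa using
      ((hg _ hxt).hasDerivAt.comp x ((hasDerivAt_id x).add_const t)).const_mul (w t)

theorem fundamental_inverse_temperature_of_marginal_ensemble_general
    (f : ℝ → ℝ) (hf0 : ∀ β, 0 ≤ f β)
    (ρ : ℝ → ℝ)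
    (hρdef : ∀ E, ρ E = ∫ β in Ioi (0:ℝ), f β * Real.exp (-β * E))
    (hρint : ∀ E > (0:ℝ),
      IntegrableOn (fun β => f β * Real.exp (-β * E)) (Ioi (0:ℝ)))
    (hρpos : ∀ E > (0:ℝ), 0 < ρ E)
    (βF : ℝ → ℝ) (hβF : ∀ E, βF E = -deriv ρ E / ρ E)
    (ΩB : ℝ → ℝ)
    (ρA : ℝ → ℝ)
    (hρAdef : ∀ ε, ρA ε = ∫ E' in Ioi (0:ℝ), ΩB E' * ρ (ε + E'))
    (hρAint : ∀ ε > (0:ℝ),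
      IntegrableOn (fun E' => ΩB E' * ρ (ε + E')) (Ioi (0:ℝ)))
    (hρA'int : ∀ ε > (0:ℝ),
      IntegrableOn (fun E' => ΩB E' * (-(deriv ρ (ε + E')))) (Ioi (0:ℝ))) :
    ∀ ε > (0:ℝ),
      HasDerivAt ρA (∫ E' in Ioi (0:ℝ), ΩB E' * deriv ρ (ε + E')) ε
      ∧ -deriv ρA ε / ρA ε
          = (∫ E' in Ioi (0:ℝ), ΩB E' * (βF (ε + E') * ρ (ε + E'))) / ρA ε := by
  intro ε hε
  obtain rfl : ρA = fun x => ∫ t in Ioi 0, ΩB t * ρ (x + t) := funext hρAdef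
  obtain rfl : ρ = fun x => ∫ β in Ioi 0, f β * Real.exp (-β * x) := funext hρdef
  have hρA := hasDerivAt_setIntegral_mul_comp_add
    (fun E hE => (hasDerivAt_laplace hρint hE).differentiableAt)
    (abs_deriv_laplace_antitoneOn (fun β _ => hf0 β) hρint) hρAint
    (fun x hx => by simpa using (hρA'int x hx).neg) hε
  refine ⟨hρA, ?_⟩
  rw [hρA.deriv, ← integral_neg]
  congr 1
  refine setIntegral_congr_fun measurableSet_Ioi fun t (ht : 0 < t) => ?_
  rw [hβF, div_mul_cancel₀ _ (hρpos _ (by linarith)).ne']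
  ring

/-- **Fundamental inverse temperature of a marginal ensemble.** Let `ρ` be the
ensemble function of a superstatistical weight `f`, finite and strictly positive for
all `E > 0`, with fundamental inverse temperature `β_F(E) = -ρ'(E)/ρ(E)`. Let `Ω_B`
be a density of states, not almost everywhere zero, such that the marginal ensemble
function `ρ_A(ε) = ∫₀^∞ Ω_B(E') ρ(ε+E') dE'` and `∫₀^∞ Ω_B(E') (-ρ'(ε+E')) dE'` are
finite for all `ε > 0`. Then `ρ_A` is differentiable on `(0,∞)` with
`ρ_A'(ε) = ∫₀^∞ Ω_B(E') ρ'(ε+E') dE'`, and the fundamental inverse temperature of the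
marginal ensemble, `β_F^{(A)}(ε) = -ρ_A'(ε)/ρ_A(ε)`, equals the expectation
`∫₀^∞ Ω_B(E') β_F(ε+E') ρ(ε+E') dE' / ρ_A(ε)` of `β_F` under the conditional density
`P(E|ε) = Ω_B(E-ε) ρ(E)/ρ_A(ε)` supported on `E > ε`. -/
theorem fundamental_inverse_temperature_of_marginal_ensemble
    (f : ℝ → ℝ) (hf : Measurable f) (hf0 : ∀ β, 0 ≤ f β)
    (ρ : ℝ → ℝ)
    (hρdef : ∀ E, ρ E = ∫ β in Ioi (0:ℝ), f β * Real.exp (-β * E))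
    (hρint : ∀ E > (0:ℝ),
      IntegrableOn (fun β => f β * Real.exp (-β * E)) (Ioi (0:ℝ)))
    (hρpos : ∀ E > (0:ℝ), 0 < ρ E)
    (βF : ℝ → ℝ) (hβF : ∀ E, βF E = -deriv ρ E / ρ E)
    (ΩB : ℝ → ℝ) (hΩB : Measurable ΩB) (hΩB0 : ∀ E, 0 ≤ ΩB E)
    (hΩBne : ¬ (∀ᵐ E ∂(volume.restrict (Ioi (0:ℝ))), ΩB E = 0))
    (ρA : ℝ → ℝ)
    (hρAdef : ∀ ε, ρA ε = ∫ E' in Ioi (0:ℝ), ΩB E' * ρ (ε + E'))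
    (hρAint : ∀ ε > (0:ℝ),
      IntegrableOn (fun E' => ΩB E' * ρ (ε + E')) (Ioi (0:ℝ)))
    (hρA'int : ∀ ε > (0:ℝ),
      IntegrableOn (fun E' => ΩB E' * (-(deriv ρ (ε + E')))) (Ioi (0:ℝ))) :
    ∀ ε > (0:ℝ),
      HasDerivAt ρA (∫ E' in Ioi (0:ℝ), ΩB E' * deriv ρ (ε + E')) ε
      ∧ -deriv ρA ε / ρA ε
          = (∫ E' in Ioi (0:ℝ), ΩB E' * (βF (ε + E') * ρ (ε + E'))) / ρA ε :=
  fundamental_inverse_temperature_of_marginal_ensemble_general f hf0 ρ hρdef hρint hρpos βF hβF ΩB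
    ρA hρAdef hρAint hρA'int
end

section
/- Chapman–Kolmogorov identity for the conditional inverse temperature distribution of a subsystem. Let f : (0,∞) → [0,∞) and Ω_B : (0,∞) → [0,∞) be measurable, ρ(E) := ∫₀^∞ f(β) exp(−βE) dβ finite and strictly positive for E > 0, Z_B(β) := ∫₀^∞ Ω_B(E) exp(−βE) dE, and ρ_A(ε) := ∫₀^∞ Ω_B(E′) ρ(ε + E′) dE′ finite and strictly positive for ε > 0. Then for every β > 0 and every ε > 0: ∫_ε^∞ [ exp(−βE) f(β)/ρ(E) ] · [ Ω_B(E − ε) ρ(E)/ρ_A(ε) ] dE = exp(−βε) · f(β) · Z_B(β) / ρ_A(ε); that is, mixing the conditional temperature densities P(β|E) over the conditional energy density P(E|ε) reproduces exactly the marginal ensemble's conditional temperature density P(β|ε) = exp(−βε) f(β) Z_B(β)/ρ_A(ε). -/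
open MeasureTheory Set ENNReal

/-! The factor `ρ(E)` in `P(β|E)` cancels against the one in `P(E|ε)`, and
`exp(-βE) = exp(-βε) exp(-β(E-ε))`; what remains to integrate over `E > ε` is
`Ω_B(E-ε) exp(-β(E-ε))`, which the shift `E = ε + E_B` turns into the integral `Z_B(β)`. -/

theorem setLIntegral_Ioi_comp_sub (g : ℝ → ℝ≥0∞) (a : ℝ) :
    ∫⁻ x in Ioi a, g (x - a) = ∫⁻ x in Ioi 0, g x := by
  have hpre : (fun x : ℝ => x + a) ⁻¹' Ioi a = Ioi 0 := by
    ext x; simp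
  have hshift := (measurePreserving_add_right volume a).setLIntegral_comp_preimage_emb
    (measurableEmbedding_addRight a) (fun x => g (x - a)) (Ioi a)
  simpa only [hpre, add_sub_cancel_right] using hshift.symm

theorem ENNReal.ofReal_div_mul_ofReal_mul_div_cancel {a b r s : ℝ} (ha : 0 ≤ a) (hr : 0 < r)
    (hs : 0 < s) :
    ENNReal.ofReal (a / r) * ENNReal.ofReal (b * r / s) =
      ENNReal.ofReal (a * b) / ENNReal.ofReal s := by
  have hcancel : a / r * (b * r / s) = a * b / s := by
    field_simp
  rw [← ENNReal.ofReal_mul (div_nonneg ha hr.le), hcancel, ENNReal.ofReal_div_of_pos hs]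

theorem chapman_kolmogorov_conditional_inverse_temperature_general
    (f ΩB : ℝ → ℝ)
    (hf0 : ∀ β, 0 ≤ f β)
    (ρ : ℝ → ℝ)
    (hρpos : ∀ E > (0:ℝ), 0 < ρ E)
    (ZB : ℝ → ℝ≥0∞)
    (hZB : ∀ β, ZB β = ∫⁻ E in Ioi (0:ℝ), ENNReal.ofReal (ΩB E * Real.exp (-β * E)))
    (ρA : ℝ → ℝ)
    (hρApos : ∀ ε > (0:ℝ), 0 < ρA ε) :
    ∀ β > (0:ℝ), ∀ ε > (0:ℝ),
      ∫⁻ E in Ioi ε,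
        ENNReal.ofReal (Real.exp (-β * E) * f β / ρ E) *
          ENNReal.ofReal (ΩB (E - ε) * ρ E / ρA ε)
      = ENNReal.ofReal (Real.exp (-β * ε) * f β) * ZB β / ENNReal.ofReal (ρA ε) := by
  intro β _ ε hε
  have hweight : 0 ≤ Real.exp (-β * ε) * f β := mul_nonneg (Real.exp_pos _).le (hf0 β)
  have hintegrand : ∀ E ∈ Ioi ε,
      ENNReal.ofReal (Real.exp (-β * E) * f β / ρ E) *
        ENNReal.ofReal (ΩB (E - ε) * ρ E / ρA ε)
      = ENNReal.ofReal (Real.exp (-β * ε) * f β) *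
          ENNReal.ofReal (ΩB (E - ε) * Real.exp (-β * (E - ε))) * (ENNReal.ofReal (ρA ε))⁻¹ := by
    intro E hE
    have hexp : Real.exp (-β * E) = Real.exp (-β * ε) * Real.exp (-β * (E - ε)) := by
      rw [← Real.exp_add]; ring_nf
    rw [ofReal_div_mul_ofReal_mul_div_cancel (mul_nonneg (Real.exp_pos _).le (hf0 β))
        (hρpos E (hε.trans hE)) (hρApos ε hε), ← div_eq_mul_inv, ← ENNReal.ofReal_mul hweight,
      hexp]
    congr 2
    ring
  rw [setLIntegral_congr_fun measurableSet_Ioi hintegrand,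
    setLIntegral_Ioi_comp_sub (fun x => ENNReal.ofReal (Real.exp (-β * ε) * f β) *
      ENNReal.ofReal (ΩB x * Real.exp (-β * x)) * (ENNReal.ofReal (ρA ε))⁻¹),
    lintegral_mul_const' _ _ (inv_ne_top.2 (ofReal_pos.2 (hρApos ε hε)).ne'),
    lintegral_const_mul' _ _ ofReal_ne_top, ← hZB, div_eq_mul_inv]

/-- **Chapman–Kolmogorov identity for the conditional inverse temperature distribution
of a subsystem.** With ensemble function `ρ(E) = ∫₀^∞ f(β)exp(-βE)dβ` finite and
positive for `E > 0`, partition function `Z_B(β) = ∫₀^∞ Ω_B(E)exp(-βE)dE`, and marginal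
ensemble function `ρ_A(ε) = ∫₀^∞ Ω_B(E')ρ(ε+E')dE'` finite and positive for `ε > 0`,
one has for every `β > 0` and `ε > 0`:
`∫_ε^∞ [exp(-βE)f(β)/ρ(E)]·[Ω_B(E-ε)ρ(E)/ρ_A(ε)] dE = exp(-βε)f(β)Z_B(β)/ρ_A(ε)`;
mixing the conditional temperature densities `P(β|E)` over the conditional energy
density `P(E|ε)` reproduces the marginal ensemble's conditional temperature density. -/
theorem chapman_kolmogorov_conditional_inverse_temperature
    (f ΩB : ℝ → ℝ) (hf : Measurable f) (hΩB : Measurable ΩB)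
    (hf0 : ∀ β, 0 ≤ f β) (hΩB0 : ∀ E, 0 ≤ ΩB E)
    (ρ : ℝ → ℝ)
    (hρdef : ∀ E, ρ E = ∫ β in Ioi (0:ℝ), f β * Real.exp (-β * E))
    (hρint : ∀ E > (0:ℝ),
      IntegrableOn (fun β => f β * Real.exp (-β * E)) (Ioi (0:ℝ)))
    (hρpos : ∀ E > (0:ℝ), 0 < ρ E)
    (ZB : ℝ → ℝ≥0∞)
    (hZB : ∀ β, ZB β = ∫⁻ E in Ioi (0:ℝ), ENNReal.ofReal (ΩB E * Real.exp (-β * E)))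
    (ρA : ℝ → ℝ)
    (hρAdef : ∀ ε, ρA ε = ∫ E' in Ioi (0:ℝ), ΩB E' * ρ (ε + E'))
    (hρAint : ∀ ε > (0:ℝ),
      IntegrableOn (fun E' => ΩB E' * ρ (ε + E')) (Ioi (0:ℝ)))
    (hρApos : ∀ ε > (0:ℝ), 0 < ρA ε) :
    ∀ β > (0:ℝ), ∀ ε > (0:ℝ),
      ∫⁻ E in Ioi ε,
        ENNReal.ofReal (Real.exp (-β * E) * f β / ρ E) *
          ENNReal.ofReal (ΩB (E - ε) * ρ E / ρA ε)
      = ENNReal.ofReal (Real.exp (-β * ε) * f β) * ZB β / ENNReal.ofReal (ρA ε) :=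
  chapman_kolmogorov_conditional_inverse_temperature_general f ΩB hf0 ρ hρpos ZB hZB ρA hρApos
end

section
/- Gamma mixture of Maxwellians yields the kappa distribution. Let u > 0, β_S > 0, m > 0 and v ∈ ℝ³. Then ∫₀^∞ [ 1/(u β_S Γ(1/u)) · exp(−β/(u β_S)) · (β/(u β_S))^{1/u − 1} ] · (mβ/(2π))^{3/2} · exp(−β m |v|²/2) dβ = (m u β_S/(2π))^{3/2} · ( Γ(3/2 + 1/u) / Γ(1/u) ) · [ 1 + u β_S · m |v|²/2 ]^{−(1/u + 3/2)}. -/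
/-!
Both factors of the integrand are a power of `β` times an exponential in `β`, so their product is
a single gamma integrand, of shape `1/u + 3/2` and rate `1/(uβ_S) + m|v|²/2`, which Euler's integral
for `Γ` evaluates.
-/

open MeasureTheory Set Real

/-- Shape `k`, scale `θ`; Mathlib's `ProbabilityTheory.gammaPDFReal` is parametrised by the rate
`1 / θ` instead. -/
noncomputable def gammaScaleDensity (k θ β : ℝ) : ℝ :=
  1 / (θ * Gamma k) * exp (-β / θ) * (β / θ) ^ (k - 1)

lemma gammaScaleDensity_mul_rpow_mul_exp {k θ β : ℝ} (a b : ℝ) (hθ : 0 < θ) (hβ : 0 < β) :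
    gammaScaleDensity k θ β * (β ^ a * exp (-(b * β)))
      = (θ ^ k * Gamma k)⁻¹ * (β ^ (k + a - 1) * exp (-((1 / θ + b) * β))) := by
  have hpow : (β / θ) ^ (k - 1) * β ^ a = θ / θ ^ k * β ^ (k + a - 1) := by
    rw [div_rpow hβ.le hθ.le, rpow_sub_one hθ.ne', show k + a - 1 = (k - 1) + a by ring,
      rpow_add hβ]
    field_simp
  have hexp : exp (-β / θ) * exp (-(b * β)) = exp (-((1 / θ + b) * β)) := by
    rw [← exp_add]; congr 1; field_simp; ring
  calc gammaScaleDensity k θ β * (β ^ a * exp (-(b * β)))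
      = 1 / (θ * Gamma k) * ((β / θ) ^ (k - 1) * β ^ a) * (exp (-β / θ) * exp (-(b * β))) := by
        rw [gammaScaleDensity]; ring
    _ = _ := by
        rw [hpow, hexp, mul_inv]
        field_simp

theorem integral_gammaScaleDensity_mul_rpow_mul_exp {k θ a b : ℝ} (hθ : 0 < θ)
    (hka : 0 < k + a) (hθb : 0 < 1 + θ * b) :
    ∫ β in Ioi (0 : ℝ), gammaScaleDensity k θ β * (β ^ a * exp (-(b * β)))
      = Gamma (k + a) / Gamma k * θ ^ a * (1 + θ * b) ^ (-(k + a)) := by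
  have hrate : 1 / θ + b = (1 + θ * b) / θ := by field_simp
  have hrate_pos : 0 < 1 / θ + b := by rw [hrate]; positivity
  rw [setIntegral_congr_fun measurableSet_Ioi
      fun β hβ => gammaScaleDensity_mul_rpow_mul_exp a b hθ hβ,
    integral_const_mul, integral_rpow_mul_exp_neg_mul_Ioi hka hrate_pos, hrate, one_div_div,
    div_rpow hθ.le hθb.le, rpow_add hθ, rpow_neg hθb.le]
  field_simp

/-- **Gamma mixture of Maxwellians yields the kappa distribution.** For `u > 0`,
`β_S > 0`, `m > 0` and `v ∈ ℝ³`, integrating the Maxwellian velocity density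
`(mβ/(2π))^{3/2} exp(-β m|v|²/2)` against the gamma inverse temperature density
`(1/(uβ_S Γ(1/u))) exp(-β/(uβ_S)) (β/(uβ_S))^{1/u-1}` yields the kappa distribution
`(muβ_S/(2π))^{3/2} (Γ(3/2+1/u)/Γ(1/u)) [1 + uβ_S m|v|²/2]^{-(1/u+3/2)}`. -/
theorem gamma_mixture_of_maxwellians_is_kappa
    (u βS m : ℝ) (hu : 0 < u) (hβS : 0 < βS) (hm : 0 < m)
    (v : EuclideanSpace ℝ (Fin 3)) :
    ∫ β in Ioi (0:ℝ),
      (1 / (u * βS * Real.Gamma (1 / u)) * Real.exp (-β / (u * βS))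
          * (β / (u * βS)) ^ (1 / u - 1))
        * ((m * β / (2 * Real.pi)) ^ ((3:ℝ) / 2)
          * Real.exp (-β * m * ‖v‖ ^ 2 / 2))
    = (m * u * βS / (2 * Real.pi)) ^ ((3:ℝ) / 2)
        * (Real.Gamma (3 / 2 + 1 / u) / Real.Gamma (1 / u))
        * (1 + u * βS * m * ‖v‖ ^ 2 / 2) ^ (-(1 / u + 3 / 2)) := by
  have hθ : 0 < u * βS := by positivity
  have hmaxwell : ∀ β ∈ Ioi (0 : ℝ),
      (m * β / (2 * π)) ^ ((3 : ℝ) / 2) * exp (-β * m * ‖v‖ ^ 2 / 2)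
        = (m / (2 * π)) ^ ((3 : ℝ) / 2) * (β ^ ((3 : ℝ) / 2) * exp (-(m * ‖v‖ ^ 2 / 2 * β))) :=
    fun β hβ => by
      rw [mul_div_right_comm, mul_rpow (by positivity) (le_of_lt hβ), mul_assoc]
      ring_nf
  have hscale : (m * u * βS / (2 * π)) ^ ((3 : ℝ) / 2)
      = (m / (2 * π)) ^ ((3 : ℝ) / 2) * (u * βS) ^ ((3 : ℝ) / 2) := by
    rw [← mul_rpow (by positivity) hθ.le]; ring_nf
  calc _ = ∫ β in Ioi (0 : ℝ), (m / (2 * π)) ^ ((3 : ℝ) / 2)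
          * (gammaScaleDensity (1 / u) (u * βS) β
            * (β ^ ((3 : ℝ) / 2) * exp (-(m * ‖v‖ ^ 2 / 2 * β)))) :=
        setIntegral_congr_fun measurableSet_Ioi fun β hβ => by
          rw [hmaxwell β hβ, gammaScaleDensity]; ring
    _ = _ := by
      rw [integral_const_mul, integral_gammaScaleDensity_mul_rpow_mul_exp hθ (by positivity)
          (by positivity), hscale, add_comm (3 / 2 : ℝ)]
      ring_nf
end

section
/- Closed form of the spatial distribution in a constant electric field under gamma superstatistics. Let u > 0, β_S > 0, E₀ > 0, L > 0, q ∈ ℝ with q ≠ 0, and x ∈ [−L/2, L/2]; set R := u β_S E₀ L |q|. Then (|q| E₀ / (2 L² Γ(1/u))) · ∫₀^∞ exp( −β/(u β_S) + β q E₀ x ) · (β/(u β_S))^{1/u} / sinh( |q| β E₀ L / 2 ) dβ = (1/(u L³ R^{1/u})) · ζ( 1/u + 1, 1/R − sgn(q)·x/L + 1/2 ), where ζ(s,a) is the Hurwitz zeta function and sgn(q) is the sign of q. (The integral converges since 1/(uβ_S) − qE₀x + |q|E₀L/2 ≥ 1/(uβ_S) > 0 for |x| ≤ L/2, and the second Hurwitz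 argument is positive.) -/
/-!
Expanding `1 / sinh (k β) = 2 ∑ₙ exp (-(2n + 1) k β)` turns the integrand into a series of
Gamma-type integrands `β ^ (1/u) exp (-2k (n + a) β)`, with `a` the Hurwitz argument.
Each integrates to `Γ (1/u + 1) / (2k (n + a)) ^ (1/u + 1)`, and the interchange of sum and
integral is justified by absolute convergence, so the integral is a multiple of
`ζ (1/u + 1, a)`.
-/

open MeasureTheory Set

/-- The Hurwitz zeta function `ζ(s, a) = ∑_{n=0}^∞ (n + a)^{-s}`, for real `s > 1`
and `a > 0`. -/
noncomputable def hurwitzZetaReal (s a : ℝ) : ℝ := ∑' n : ℕ, ((n : ℝ) + a) ^ (-s)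

namespace Real

lemma integrableOn_rpow_mul_exp_neg_mul_Ioi {s r : ℝ} (hs : 0 < s) (hr : 0 < r) :
    IntegrableOn (fun t : ℝ ↦ t ^ (s - 1) * exp (-(r * t))) (Ioi 0) :=
  .of_integral_ne_zero <| by rw [integral_rpow_mul_exp_neg_mul_Ioi hs hr]; positivity

lemma hasSum_integral_rpow_mul_of_hasSum_exp {ι : Type*} [Countable ι] {a p : ι → ℝ}
    {F : ℝ → ℝ} {s : ℝ} (hp : ∀ i, 0 < p i) (hs : 0 < s)
    (hF : ∀ t ∈ Ioi 0, HasSum (fun i ↦ a i * exp (-(p i * t))) (F t))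
    (h_sum : Summable fun i ↦ |a i| / p i ^ s) :
    HasSum (fun i ↦ Gamma s * a i / p i ^ s) (∫ t in Ioi 0, t ^ (s - 1) * F t) := by
  set G : ι → ℝ → ℝ := fun i t ↦ a i * (t ^ (s - 1) * exp (-(p i * t)))
  have h_int (i : ι) : ∫ t in Ioi 0, t ^ (s - 1) * exp (-(p i * t)) = Gamma s / p i ^ s := by
    rw [integral_rpow_mul_exp_neg_mul_Ioi hs (hp i), div_rpow zero_le_one (hp i).le, one_rpow,
      one_div_mul_eq_div]
  have h_norm (i : ι) : ∫ t in Ioi 0, ‖G i t‖ = Gamma s * (|a i| / p i ^ s) := by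
    rw [setIntegral_congr_fun measurableSet_Ioi fun t (ht : 0 < t) ↦ by
        rw [norm_mul, norm_of_nonneg (by positivity : 0 ≤ t ^ (s - 1) * exp (-(p i * t)))],
      integral_const_mul, h_int, norm_eq_abs, mul_div_left_comm]
  have h_tsum : ∀ t ∈ Ioi 0, t ^ (s - 1) * F t = ∑' i, G i t := fun t ht ↦ by
    rw [← ((hF t ht).mul_left (t ^ (s - 1))).tsum_eq]
    exact tsum_congr fun i ↦ mul_left_comm _ _ _
  have key := hasSum_integral_of_summable_integral_norm (μ := volume.restrict (Ioi 0)) (F := G)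
    (fun i ↦ (integrableOn_rpow_mul_exp_neg_mul_Ioi hs (hp i)).const_mul _)
    (by simpa only [h_norm] using h_sum.mul_left (Gamma s))
  rw [setIntegral_congr_fun measurableSet_Ioi h_tsum]
  refine key.congr_fun fun i ↦ ?_
  simp only [G]
  rw [integral_const_mul, h_int, mul_div_assoc, mul_div_left_comm]

lemma hasSum_inv_sinh {t : ℝ} (ht : 0 < t) :
    HasSum (fun n : ℕ ↦ 2 * exp (-((2 * n + 1) * t))) (sinh t)⁻¹ := by
  have h_ratio : exp (-(2 * t)) < 1 := exp_lt_one_iff.mpr (by linarith)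
  have key := (hasSum_geometric_of_lt_one (exp_pos _).le h_ratio).mul_left (2 * exp (-t))
  have h_sinh : (sinh t)⁻¹ = 2 * exp (-t) * (1 - exp (-(2 * t)))⁻¹ := by
    have h_one_lt : 1 < exp t := one_lt_exp_iff.mpr ht
    have h_sq : exp (-(2 * t)) = (exp t ^ 2)⁻¹ := by rw [← exp_nat_mul, ← exp_neg]; ring_nf
    have h_ne : exp t ^ 2 - 1 ≠ 0 := by nlinarith
    rw [sinh_eq, h_sq, exp_neg]
    field_simp
  rw [h_sinh]
  refine key.congr_fun fun n ↦ ?_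
  rw [← exp_nat_mul, mul_assoc, ← exp_add]
  ring_nf

lemma sign_mul_abs (r : ℝ) : sign r * |r| = r := by
  rcases lt_trichotomy r 0 with h | rfl | h
  · rw [sign_of_neg h, abs_of_neg h, neg_one_mul, neg_neg]
  · rw [abs_zero, mul_zero]
  · rw [sign_of_pos h, abs_of_pos h, one_mul]

lemma summable_nat_add_rpow_neg {a s : ℝ} (ha : 0 < a) (hs : 1 < s) :
    Summable fun n : ℕ ↦ ((n : ℝ) + a) ^ (-s) :=
  ((summable_one_div_nat_add_rpow a s).mpr hs).congr fun n ↦ by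
    have : 0 < (n : ℝ) + a := by positivity
    rw [abs_of_pos this, rpow_neg this.le, one_div]

lemma integral_rpow_mul_exp_neg_mul_div_sinh {s c k : ℝ} (hs : 1 < s) (hk : 0 < k)
    (hck : 0 < c + k) :
    ∫ t in Ioi 0, t ^ (s - 1) * (exp (-(c * t)) / sinh (k * t)) =
      2 * Gamma s / (2 * k) ^ s * hurwitzZetaReal s ((c + k) / (2 * k)) := by
  set a := (c + k) / (2 * k)
  have ha : 0 < a := by positivity
  have hna (n : ℕ) : 0 < (n : ℝ) + a := by positivity
  have hpow (n : ℕ) : (2 * k * (n + a)) ^ s = (2 * k) ^ s * ((n : ℝ) + a) ^ s :=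
    mul_rpow (by positivity) (hna n).le
  have hterm (n : ℕ) :
      |2| / (2 * k * (n + a)) ^ s = 2 / (2 * k) ^ s * ((n : ℝ) + a) ^ (-s) := by
    rw [abs_two, hpow, rpow_neg (hna n).le]; field_simp
  -- `exp (-c t) / sinh (k t) = ∑ 2 exp (-2k (n + a) t)`, since `(2n + 1) k + c = 2k (n + a)`
  have hF : ∀ t ∈ Ioi (0 : ℝ), HasSum (fun n : ℕ ↦ 2 * exp (-(2 * k * (n + a) * t)))
      (exp (-(c * t)) / sinh (k * t)) := fun t (ht : 0 < t) ↦ by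
    refine ((hasSum_inv_sinh (by positivity : 0 < k * t)).mul_left (exp (-(c * t)))).congr_fun
      fun n ↦ ?_
    rw [mul_left_comm, ← exp_add]
    congr 2
    simp only [a]
    field_simp
    ring
  have key := hasSum_integral_rpow_mul_of_hasSum_exp (s := s) (fun n ↦ by positivity)
    (by linarith) hF
    (by simpa only [hterm] using (summable_nat_add_rpow_neg ha hs).mul_left (2 / (2 * k) ^ s))
  rw [← key.tsum_eq, hurwitzZetaReal, ← tsum_mul_left]
  refine tsum_congr fun n ↦ ?_
  rw [hpow, rpow_neg (hna n).le]
  field_simp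

lemma integral_exp_neg_mul_mul_div_rpow_div_sinh {p ν c k : ℝ} (hp : 0 < p) (hν : 0 < ν)
    (hk : 0 < k) (hck : 0 < c + k) :
    ∫ t in Ioi 0, exp (-(c * t)) * (t / ν) ^ p / sinh (k * t) =
      2 * Gamma (p + 1) / (ν ^ p * (2 * k) ^ (p + 1)) *
        hurwitzZetaReal (p + 1) ((c + k) / (2 * k)) := by
  have h_integrand : ∀ t ∈ Ioi (0 : ℝ), exp (-(c * t)) * (t / ν) ^ p / sinh (k * t) =
      (ν ^ p)⁻¹ * (t ^ ((p + 1) - 1) * (exp (-(c * t)) / sinh (k * t))) :=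
    fun t (ht : 0 < t) ↦ by
      rw [div_rpow ht.le hν.le, add_sub_cancel_right]
      ring
  rw [setIntegral_congr_fun measurableSet_Ioi h_integrand, integral_const_mul,
    integral_rpow_mul_exp_neg_mul_div_sinh (by linarith) hk hck]
  ring

end Real

/-- **Closed form of the spatial distribution in a constant electric field under gamma
superstatistics.** For `u > 0`, `β_S > 0`, `E₀ > 0`, `L > 0`, `q ≠ 0`,
`x ∈ [-L/2, L/2]` and `R = uβ_S E₀ L |q|`,
`(|q|E₀/(2L²Γ(1/u))) ∫₀^∞ exp(-β/(uβ_S) + βqE₀x) (β/(uβ_S))^{1/u} / sinh(|q|βE₀L/2) dβ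
  = (1/(uL³R^{1/u})) ζ(1/u + 1, 1/R - sgn(q)x/L + 1/2)`. -/
theorem spatial_distribution_constant_field_gamma_superstatistics
    (u βS E₀ L q x : ℝ) (hu : 0 < u) (hβS : 0 < βS) (hE₀ : 0 < E₀) (hL : 0 < L)
    (hq : q ≠ 0) (hx : x ∈ Icc (-(L / 2)) (L / 2))
    (R : ℝ) (hR : R = u * βS * E₀ * L * |q|) :
    |q| * E₀ / (2 * L ^ 2 * Real.Gamma (1 / u))
        * ∫ β in Ioi (0:ℝ),
            Real.exp (-β / (u * βS) + β * q * E₀ * x) * (β / (u * βS)) ^ (1 / u)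
              / Real.sinh (|q| * β * E₀ * L / 2)
    = 1 / (u * L ^ 3 * R ^ (1 / u))
        * hurwitzZetaReal (1 / u + 1) (1 / R - Real.sign q * x / L + 1 / 2) := by
  set ν := u * βS with hν_def
  set k := |q| * E₀ * L / 2 with hk_def
  set c := 1 / ν - q * E₀ * x with hc_def
  have hν : 0 < ν := by positivity
  have hk : 0 < k := by positivity
  clear_value ν k c
  have hck : 0 < c + k := by
    have hqx : q * x ≤ |q| * (L / 2) := (le_abs_self _).trans <| by
      rw [abs_mul]; exact mul_le_mul_of_nonneg_left (abs_le.mpr hx) (abs_nonneg q)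
    have : c + k = 1 / ν + E₀ * (|q| * (L / 2) - q * x) := by rw [hc_def, hk_def]; ring
    rw [this]
    exact add_pos_of_pos_of_nonneg (by positivity) (mul_nonneg hE₀.le (by linarith))
  have hRk : R = ν * (2 * k) := by rw [hR, hν_def, hk_def]; ring
  have h_arg : (c + k) / (2 * k) = 1 / R - Real.sign q * x / L + 1 / 2 := by
    rw [hRk, hc_def, hk_def]
    field_simp
    linear_combination 2 * ν * E₀ * x * Real.sign_mul_abs q
  have h_exp (β : ℝ) : -β / ν + β * q * E₀ * x = -(c * β) := by rw [hc_def]; ring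
  have h_sinh (β : ℝ) : |q| * β * E₀ * L / 2 = k * β := by rw [hk_def]; ring
  simp only [h_exp, h_sinh]
  rw [Real.integral_exp_neg_mul_mul_div_rpow_div_sinh (by positivity) hν hk hck, h_arg,
    Real.Gamma_add_one (by positivity), Real.rpow_add_one (by positivity), hRk,
    Real.mul_rpow hν.le (by positivity), hk_def]
  field_simp
end

section
/- Canonical limit of the superstatistical spatial distribution. For every real r > 0 and every real a, lim_{s → ∞} s · (s/r)^s · ζ( s + 1, s/r + a ) = r · exp(−a r) / (1 − exp(−r)), where ζ is the Hurwitz zeta function. (Equivalently, writing s = 1/u, R = r·u and a = 1/2 − sgn(q)·x/L with r = β E₀ L |q|, the spatial distribution (1/(u L³ R^{1/u})) ζ(1/u+1, 1/R + a) converges as u → 0⁺, β_S → β, to the canonical distribution (|q|βE₀/(2L²)) · exp(βqE₀x)/sinh(|q|βE₀L/2).) -/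
/-!
Since `n + s/r + a = (s/r) (1 + (n + a) r/s)`, the rescaled zeta value equals
`∑ₙ r (1 + (n + a) r/s)^{-(s+1)}`, whose `n`-th term tends to `r e^{-(n + a) r}`; the limit is
the sum of this geometric series. Limit and sum may be exchanged by dominated convergence:
Bernoulli's inequality bounds the terms with `n + a > 0` by `4 / (r (n + a)²)` uniformly in
`s ≥ 1`, and the finitely many remaining terms converge individually.
-/

open MeasureTheory Set

open Filter Topology Real

lemma tendsto_tsum_of_dominated_convergence_off_finset {α β G : Type*} {𝓕 : Filter α}
    [NormedAddCommGroup G] [CompleteSpace G]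
    {f : α → β → G} {g : β → G} {bound : β → ℝ} (T : Finset β) (h_sum : Summable bound)
    (hab : ∀ k : β, Tendsto (f · k) 𝓕 (𝓝 (g k)))
    (h_bound : ∀ᶠ n in 𝓕, ∀ k ∉ T, ‖f n k‖ ≤ bound k) :
    Tendsto (∑' k, f · k) 𝓕 (𝓝 (∑' k, g k)) := by
  classical
  let bound' : β → ℝ := fun k ↦ if k ∈ T then ‖g k‖ + 1 else bound k
  have h_sum' : Summable bound' :=
    h_sum.congr_cofinite <| T.eventually_cofinite_notMem.mono fun k hk ↦ by simp [bound', hk]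
  have h_bound_T : ∀ᶠ n in 𝓕, ∀ k ∈ T, ‖f n k‖ ≤ ‖g k‖ + 1 :=
    T.eventually_all.2 fun k _ ↦
      ((hab k).norm.eventually (gt_mem_nhds (lt_add_one _))).mono fun _ h ↦ h.le
  refine tendsto_tsum_of_dominated_convergence h_sum' hab ?_
  filter_upwards [h_bound, h_bound_T] with n hn hnT k
  by_cases hk : k ∈ T
  · simpa [bound', hk] using hnT k hk
  · simpa [bound', hk] using hn k hk

lemma tendsto_one_add_div_rpow_neg_add_one (c : ℝ) :
    Tendsto (fun s : ℝ ↦ (1 + c / s) ^ (-(s + 1))) atTop (𝓝 (exp (-c))) := by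
  have h_base : Tendsto (fun s : ℝ ↦ 1 + c / s) atTop (𝓝 1) := by
    simpa using tendsto_const_nhds.add (tendsto_const_nhds.div_atTop (tendsto_id (α := ℝ)))
  have h_lim := ((tendsto_one_add_div_rpow_exp c).mul h_base).inv₀ (by simp [exp_ne_zero])
  rw [mul_one, ← exp_neg] at h_lim
  refine h_lim.congr' ?_
  filter_upwards [h_base.eventually (lt_mem_nhds zero_lt_one)] with s hs
  rw [rpow_neg hs.le, rpow_add hs, rpow_one]

lemma one_add_div_rpow_neg_add_one_le {c s : ℝ} (hc : 0 < c) (hs : 1 ≤ s) :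
    (1 + c / s) ^ (-(s + 1)) ≤ 4 / c ^ 2 := by
  have hs0 : 0 < s := by linarith
  have h_base : 0 < 1 + c / s := by positivity
  -- Bernoulli's inequality with exponent `(s + 1) / 2 ≥ 1`.
  have h_bernoulli : c / 2 ≤ (1 + c / s) ^ ((s + 1) / 2) := by
    refine le_trans ?_ (one_add_mul_self_le_rpow_one_add (by linarith [h_base]) (by linarith))
    rw [show (s + 1) / 2 * (c / s) = c / 2 + c / (2 * s) by field_simp]
    linarith [show 0 < c / (2 * s) by positivity]
  have h_sq : (c / 2) ^ 2 ≤ (1 + c / s) ^ (s + 1) := by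
    rw [show s + 1 = (s + 1) / 2 * 2 by ring, rpow_mul h_base.le, rpow_two]
    gcongr
  rw [rpow_neg h_base.le, show 4 / c ^ 2 = ((c / 2) ^ 2)⁻¹ by field_simp; norm_num]
  gcongr

lemma tsum_exp_neg_nat_add_mul (a : ℝ) {r : ℝ} (hr : 0 < r) :
    ∑' n : ℕ, exp (-((n + a) * r)) = exp (-a * r) / (1 - exp (-r)) := by
  have h_geom (n : ℕ) : exp (-((n + a) * r)) = exp (-a * r) * exp (-r) ^ n := by
    rw [← exp_nat_mul, ← exp_add]
    ring_nf
  rw [tsum_congr h_geom, tsum_mul_left,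
    tsum_geometric_of_lt_one (exp_nonneg _) (exp_lt_one_iff.mpr (by linarith)), div_eq_mul_inv]

lemma mul_rpow_mul_add_rpow_neg_add_one {r s c : ℝ} (hr : 0 < r) (hs : 0 < s)
    (hc : 0 < s / r + c) :
    s * (s / r) ^ s * (s / r + c) ^ (-(s + 1)) = r * (1 + c * r / s) ^ (-(s + 1)) := by
  have hsr : 0 < s / r := by positivity
  have h_factor : s / r + c = s / r * (1 + c * r / s) := by field_simp
  have h_base : 0 ≤ 1 + c * r / s := by
    rw [h_factor] at hc
    exact (pos_of_mul_pos_right hc hsr.le).le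
  rw [h_factor, mul_rpow hsr.le h_base, ← mul_assoc, mul_assoc s, ← rpow_add hsr,
    show s + -(s + 1) = -1 by ring, rpow_neg_one]
  field_simp

lemma mul_rpow_mul_hurwitzZetaReal {r s a : ℝ} (hr : 0 < r) (hs : 0 < s)
    (ha : 0 < s / r + a) :
    s * (s / r) ^ s * hurwitzZetaReal (s + 1) (s / r + a)
      = ∑' n : ℕ, r * (1 + (n + a) * r / s) ^ (-(s + 1)) := by
  rw [hurwitzZetaReal, ← tsum_mul_left]
  refine tsum_congr fun n ↦ ?_
  rw [show (n : ℝ) + (s / r + a) = s / r + (n + a) by ring]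
  exact mul_rpow_mul_add_rpow_neg_add_one hr hs (by linarith [n.cast_nonneg (α := ℝ)])

lemma norm_mul_one_add_div_rpow_neg_add_one_le {r s c : ℝ} (hr : 0 < r) (hc : 0 < c)
    (hs : 1 ≤ s) : ‖r * (1 + c * r / s) ^ (-(s + 1))‖ ≤ 4 / r * (1 / |c| ^ (2 : ℝ)) := by
  have hcr : 0 < c * r := mul_pos hc hr
  have h_base : 0 ≤ 1 + c * r / s := by
    have : 0 < c * r / s := div_pos hcr (by linarith)
    linarith
  rw [norm_mul, norm_of_nonneg hr.le, norm_of_nonneg (rpow_nonneg h_base _), rpow_two,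
    abs_of_pos hc]
  calc r * (1 + c * r / s) ^ (-(s + 1)) ≤ r * (4 / (c * r) ^ 2) := by
        gcongr
        exact one_add_div_rpow_neg_add_one_le hcr hs
    _ = 4 / r * (1 / c ^ 2) := by field_simp

/-- **Canonical limit of the superstatistical spatial distribution.** For every real
`r > 0` and every real `a`,
`lim_{s → ∞} s (s/r)^s ζ(s+1, s/r + a) = r exp(-ar)/(1 - exp(-r))`;
the gamma-superstatistical spatial distribution of a charged particle in a constant
electric field reduces, in the limit `u → 0⁺` (`s = 1/u → ∞`), to the canonical
(Boltzmann) spatial distribution. -/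
theorem canonical_limit_of_spatial_distribution (r : ℝ) (hr : 0 < r) (a : ℝ) :
    Filter.Tendsto
      (fun s : ℝ => s * (s / r) ^ s * hurwitzZetaReal (s + 1) (s / r + a))
      Filter.atTop
      (nhds (r * Real.exp (-a * r) / (1 - Real.exp (-r)))) := by
  have h_sum : Summable fun n : ℕ ↦ 4 / r * (1 / |n + a| ^ (2 : ℝ)) :=
    ((summable_one_div_nat_add_rpow a 2).2 one_lt_two).mul_left _
  have h_bound : ∀ᶠ s in atTop, ∀ n ∉ Finset.range (⌊-a⌋₊ + 1),
      ‖r * (1 + (n + a) * r / s) ^ (-(s + 1))‖ ≤ 4 / r * (1 / |n + a| ^ (2 : ℝ)) := by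
    filter_upwards [eventually_ge_atTop 1] with s hs n hn
    have h_floor : -a < n := Nat.lt_of_floor_lt (by simpa [Nat.lt_succ_iff] using hn)
    exact norm_mul_one_add_div_rpow_neg_add_one_le hr (by linarith) hs
  have h_lim := tendsto_tsum_of_dominated_convergence_off_finset _ h_sum
    (fun n ↦ (tendsto_one_add_div_rpow_neg_add_one _).const_mul r) h_bound
  rw [tsum_mul_left, tsum_exp_neg_nat_add_mul a hr, ← mul_div_assoc] at h_lim
  refine h_lim.congr' ?_
  have h_arg : Tendsto (fun s ↦ s / r + a) atTop atTop :=
    tendsto_atTop_add_const_right _ a (tendsto_id.atTop_div_const hr)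
  filter_upwards [eventually_gt_atTop 0, h_arg.eventually_gt_atTop 0] with s hs ha
  exact (mul_rpow_mul_hurwitzZetaReal hr hs ha).symm
end
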